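/- arXiv:1307.0728 — 7 statements merged into one kernel-verified Lean document; each statement's English description precedes it below -/
import Mathlib

section
/- Let E be a set and let 𝓕 be a family of subsets of E that contains the empty set, is closed under symmetric difference, and all of whose members are finite sets (i.e. 𝓕 is a linear subspace of the 𝔽₂-vector space of functions E → 𝔽₂ all of whose elements have finite support). Then every member of 𝓕 is the symmetric-difference sum of finitely many ⊆-minimal nonempty members of 𝓕. -/
/-! Peel off a ⊆-minimal nonempty member `M ⊆ F`, which exists because `F` is finite. Then
`F = M ∆ (M ∆ F)`, and `M ∆ F = F \ M` is a strictly smaller member of the family, so induction on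
the cardinality of `F` finishes the argument. -/

theorem Set.Finite.exists_subset_minimal {α : Type*} {P : Set α → Prop} {s : Set α}
    (hs : s.Finite) (hP : P s) : ∃ t ⊆ s, Minimal P t := by
  obtain ⟨t, hts, ht⟩ :=
    (hs.finite_subsets.inter_of_left {u | P u}).isPWO.exists_le_minimal ⟨Set.Subset.rfl, hP⟩
  exact ⟨t, hts, ht.1.2, fun u hu hut ↦ ht.2 ⟨hut.trans hts, hu⟩ hut⟩

section SymmDiffClosed

variable {E : Type*} {𝓕 : Set (Set E)}

theorem exists_list_minimal_nonempty_of_symmDiff_mem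
    (hclosed : ∀ A ∈ 𝓕, ∀ B ∈ 𝓕, symmDiff A B ∈ 𝓕) {F : Set E} (hF : F ∈ 𝓕) (hFfin : F.Finite) :
    ∃ l : List (Set E), (∀ M ∈ l, Minimal (fun N ↦ N ∈ 𝓕 ∧ N ≠ ∅) M) ∧
      F = l.foldr symmDiff ∅ := by
  induction hn : F.ncard using Nat.strong_induction_on generalizing F with
  | _ n ih =>
    by_cases hFe : F = ∅
    · exact ⟨[], by simp, hFe⟩
    obtain ⟨M, hMF, hM⟩ := hFfin.exists_subset_minimal (P := fun N ↦ N ∈ 𝓕 ∧ N ≠ ∅) ⟨hF, hFe⟩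
    have hrest : symmDiff M F = F \ M := symmDiff_of_le hMF
    have hlt : (symmDiff M F).ncard < n := by
      rw [hrest, ← hn]
      exact Set.ncard_lt_ncard
        (hMF.sdiff_ssubset_of_nonempty (Set.nonempty_iff_ne_empty.2 hM.1.2)) hFfin
    obtain ⟨l, hl, hFl⟩ :=
      ih _ hlt (hclosed M hM.1.1 F hF) (hrest ▸ hFfin.sdiff) rfl
    refine ⟨M :: l, List.forall_mem_cons.2 ⟨hM, hl⟩, ?_⟩
    rw [List.foldr_cons, ← hFl, symmDiff_symmDiff_cancel_left]

end SymmDiffClosed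

theorem stmt_0_general {E : Type*} (𝓕 : Set (Set E))
    (hclosed : ∀ A ∈ 𝓕, ∀ B ∈ 𝓕, symmDiff A B ∈ 𝓕)
    (hfin : ∀ A ∈ 𝓕, A.Finite) :
    ∀ F ∈ 𝓕, ∃ l : List (Set E),
      (∀ M ∈ l, M ∈ 𝓕 ∧ M ≠ ∅ ∧ ∀ N ∈ 𝓕, N ≠ ∅ → N ⊆ M → N = M) ∧
      F = l.foldr symmDiff ∅ := by
  intro F hF
  obtain ⟨l, hl, hFl⟩ := exists_list_minimal_nonempty_of_symmDiff_mem hclosed hF (hfin F hF)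
  exact ⟨l, fun M hM ↦ ⟨(hl M hM).1.1, (hl M hM).1.2,
    fun N hN hNe hNM ↦ (hl M hM).eq_of_le ⟨hN, hNe⟩ hNM⟩, hFl⟩

/-- If `𝓕` is a family of subsets of `E` containing `∅`, closed under symmetric
difference, and all of whose members are finite, then every member of `𝓕` is a
symmetric-difference sum of finitely many ⊆-minimal nonempty members of `𝓕`. -/
theorem stmt_0 {E : Type*} (𝓕 : Set (Set E)) (hempty : ∅ ∈ 𝓕)
    (hclosed : ∀ A ∈ 𝓕, ∀ B ∈ 𝓕, symmDiff A B ∈ 𝓕)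
    (hfin : ∀ A ∈ 𝓕, A.Finite) :
    ∀ F ∈ 𝓕, ∃ l : List (Set E),
      (∀ M ∈ l, M ∈ 𝓕 ∧ M ≠ ∅ ∧ ∀ N ∈ 𝓕, N ≠ ∅ → N ⊆ M → N = M) ∧
      F = l.foldr symmDiff ∅ :=
  stmt_0_general 𝓕 hclosed hfin
end

section
/- Let E be a set and let 𝓕 be a family of subsets of E that contains the empty set, is closed under symmetric difference, and all of whose members are finite sets. If D ⊆ E is such that D ∩ M is finite and of even cardinality for every ⊆-minimal nonempty member M of 𝓕, then D ∩ F is finite and of even cardinality for every F ∈ 𝓕. -/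
/-! Every nonempty member `F` of `𝓕` that is not minimal contains a nonempty proper member `N`,
and then `F \ N = F ∆ N` is again a member; both are strictly smaller than `F`. By induction on
the cardinality, every member of `𝓕` is therefore a disjoint union of minimal nonempty members,
and evenness of `|D ∩ ·|` is preserved under disjoint unions. -/

namespace SymmDiffClosed

variable {E : Type*} {𝓕 : Set (Set E)}

lemma exists_split_of_not_minimal (hclosed : ∀ A ∈ 𝓕, ∀ B ∈ 𝓕, symmDiff A B ∈ 𝓕)
    (hfin : ∀ A ∈ 𝓕, A.Finite) {F : Set E} (hF : F ∈ 𝓕) (hFe : F ≠ ∅)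
    (hmin : ¬ Minimal (fun N ↦ N ∈ 𝓕 ∧ N ≠ ∅) F) :
    ∃ N ∈ 𝓕, N ⊆ F ∧ F \ N ∈ 𝓕 ∧ N.ncard < F.ncard ∧ (F \ N).ncard < F.ncard := by
  obtain ⟨N, hNF, hN, hNe⟩ : ∃ N ⊂ F, N ∈ 𝓕 ∧ N ≠ ∅ := by
    simpa [minimal_iff_forall_lt, hF, hFe] using hmin
  have hFfin := hfin F hF
  refine ⟨N, hN, hNF.subset, symmDiff_of_ge hNF.subset ▸ hclosed F hF N hN,
    Set.ncard_lt_ncard hNF hFfin, Set.ncard_lt_ncard ?_ hFfin⟩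
  obtain ⟨x, hx⟩ := Set.nonempty_iff_ne_empty.2 hNe
  exact Set.sdiff_ssubset_left_iff.2 ⟨x, hNF.subset hx, hx⟩

theorem induction_on_minimal {P : Set E → Prop}
    (hclosed : ∀ A ∈ 𝓕, ∀ B ∈ 𝓕, symmDiff A B ∈ 𝓕) (hfin : ∀ A ∈ 𝓕, A.Finite)
    (empty : P ∅) (minimal : ∀ M, Minimal (fun N ↦ N ∈ 𝓕 ∧ N ≠ ∅) M → P M)
    (union : ∀ A B, Disjoint A B → P A → P B → P (A ∪ B)) :
    ∀ F ∈ 𝓕, P F := by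
  intro F hF
  induction hn : F.ncard using Nat.strong_induction_on generalizing F with
  | _ n ih =>
    by_cases hFe : F = ∅
    · exact hFe ▸ empty
    by_cases hmin : Minimal (fun N ↦ N ∈ 𝓕 ∧ N ≠ ∅) F
    · exact minimal F hmin
    obtain ⟨N, hN, hNF, hdiff, hNlt, hdifflt⟩ :=
      exists_split_of_not_minimal hclosed hfin hF hFe hmin
    rw [← Set.union_sdiff_cancel hNF]
    exact union N (F \ N) Set.disjoint_sdiff_right
      (ih _ (hn ▸ hNlt) N hN rfl) (ih _ (hn ▸ hdifflt) (F \ N) hdiff rfl)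

end SymmDiffClosed

lemma even_ncard_inter_union {E : Type*} {D A B : Set E} (hAB : Disjoint A B)
    (hA : (D ∩ A).Finite ∧ Even (D ∩ A).ncard) (hB : (D ∩ B).Finite ∧ Even (D ∩ B).ncard) :
    (D ∩ (A ∪ B)).Finite ∧ Even (D ∩ (A ∪ B)).ncard := by
  have hdisj : Disjoint (D ∩ A) (D ∩ B) :=
    hAB.mono Set.inter_subset_right Set.inter_subset_right
  rw [Set.inter_union_distrib_left, Set.ncard_union_eq hdisj hA.1 hB.1]
  exact ⟨hA.1.union hB.1, hA.2.add hB.2⟩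

theorem stmt_1_general {E : Type*} (𝓕 : Set (Set E))
    (hclosed : ∀ A ∈ 𝓕, ∀ B ∈ 𝓕, symmDiff A B ∈ 𝓕)
    (hfin : ∀ A ∈ 𝓕, A.Finite) (D : Set E)
    (hD : ∀ M ∈ 𝓕, M ≠ ∅ → (∀ N ∈ 𝓕, N ≠ ∅ → N ⊆ M → N = M) →
      (D ∩ M).Finite ∧ Even (D ∩ M).ncard) :
    ∀ F ∈ 𝓕, (D ∩ F).Finite ∧ Even (D ∩ F).ncard :=
  SymmDiffClosed.induction_on_minimal hclosed hfin (by simp)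
    (fun M hM ↦ hD M hM.prop.1 hM.prop.2 fun N hN hNe hNM ↦ hM.eq_of_le ⟨hN, hNe⟩ hNM)
    (fun _ _ ↦ even_ncard_inter_union)

/-- If `𝓕` is a family of subsets of `E` containing `∅`, closed under symmetric
difference, all of whose members are finite, and `D` has finite even intersection with
every ⊆-minimal nonempty member of `𝓕`, then `D` has finite even intersection with
every member of `𝓕`. -/
theorem stmt_1 {E : Type*} (𝓕 : Set (Set E)) (hempty : ∅ ∈ 𝓕)
    (hclosed : ∀ A ∈ 𝓕, ∀ B ∈ 𝓕, symmDiff A B ∈ 𝓕)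
    (hfin : ∀ A ∈ 𝓕, A.Finite) (D : Set E)
    (hD : ∀ M ∈ 𝓕, M ≠ ∅ → (∀ N ∈ 𝓕, N ≠ ∅ → N ⊆ M → N = M) →
      (D ∩ M).Finite ∧ Even (D ∩ M).ncard) :
    ∀ F ∈ 𝓕, (D ∩ F).Finite ∧ Even (D ∩ F).ncard :=
  stmt_1_general 𝓕 hclosed hfin D hD
end

section
/- Let G be a simple graph. If an edge set D ⊆ E(G) has finite even intersection with every ⊆-minimal nonempty finite cut of G, then D has finite even intersection with every finite cut of G. -/
open Set

variable {V : Type*}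

/-- The edge set of a cycle of `G` (a finite circuit). -/
def IsCircuit (G : SimpleGraph V) (C : Set (Sym2 V)) : Prop :=
  ∃ (v : V) (w : G.Walk v v), w.IsCycle ∧ C = {e | e ∈ w.edges}

/-- The cut `E(A, V∖A)`: edges of `G` with exactly one endvertex in `A`. -/
def cutEdges (G : SimpleGraph V) (A : Set V) : Set (Sym2 V) :=
  {e | ∃ x y, G.Adj x y ∧ x ∈ A ∧ y ∉ A ∧ e = s(x, y)}

/-- `C` is a cut of `G`. -/
def IsCut (G : SimpleGraph V) (C : Set (Sym2 V)) : Prop :=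
  ∃ A : Set V, C = cutEdges G A

/-- A bond is a ⊆-minimal nonempty cut. -/
def IsBond (G : SimpleGraph V) (B : Set (Sym2 V)) : Prop :=
  IsCut G B ∧ B ≠ ∅ ∧ ∀ C, IsCut G C → C ≠ ∅ → C ⊆ B → C = B

/-- Two edge sets are orthogonal: their intersection is finite and of even cardinality. -/
def EvenInter (D F : Set (Sym2 V)) : Prop :=
  (D ∩ F).Finite ∧ Even (D ∩ F).ncard

/-- A ray in `G`. -/
def IsRay (G : SimpleGraph V) (R : ℕ → V) : Prop :=
  Function.Injective R ∧ ∀ n, G.Adj (R n) (R (n + 1))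

/-- A double ray in `G`. -/
def IsDoubleRay (G : SimpleGraph V) (R : ℤ → V) : Prop :=
  Function.Injective R ∧ ∀ n, G.Adj (R n) (R (n + 1))

/-- The edge set of a double ray. -/
def doubleRayEdges (R : ℤ → V) : Set (Sym2 V) :=
  {e | ∃ n : ℤ, e = s(R n, R (n + 1))}

/-- `D` is the edge set of some double ray of `G`. -/
def IsDoubleRayEdgeSet (G : SimpleGraph V) (D : Set (Sym2 V)) : Prop :=
  ∃ R : ℤ → V, IsDoubleRay G R ∧ D = doubleRayEdges R

/-- `a` and `b` are joined by a walk of `G` all of whose vertices avoid `S`,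
i.e. they lie in a common component of `G − S`. -/
def ConnAvoiding (G : SimpleGraph V) (S : Set V) (a b : V) : Prop :=
  ∃ w : G.Walk a b, ∀ x ∈ w.support, x ∉ S

/-- `v` lies in `C(S,R)`, the component of `G − S` containing a tail of the ray `R`. -/
def InC (G : SimpleGraph V) (S : Set V) (R : ℕ → V) (v : V) : Prop :=
  ∃ m : ℕ, (∀ n, R (m + n) ∉ S) ∧ ConnAvoiding G S v (R m)

/-- The rays `R` and `R'` are equivalent (lie in the same end): for every finite `S`
some component of `G − S` contains a tail of both. -/
def RayEquiv (G : SimpleGraph V) (R R' : ℕ → V) : Prop :=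
  ∀ S : Set V, S.Finite → ∃ m m', (∀ n, R (m + n) ∉ S) ∧ (∀ n, R' (m' + n) ∉ S) ∧
    ConnAvoiding G S (R m) (R' m')

/-- The sequence `v` of vertices converges to the end of the ray `R`: for every finite `S`
all but finitely many `v i` lie in `C(S,R)`. -/
def ConvergesTo (G : SimpleGraph V) (R : ℕ → V) (v : ℕ → V) : Prop :=
  ∀ S : Set V, S.Finite → {i : ℕ | ¬ InC G S R (v i)}.Finite

/-- `F` is the vertex set of a `k`-fan from `u` to `Y`: a union of `k` paths starting
at `u`, pairwise sharing no vertex other than `u`, ending in `k` distinct vertices of `Y`. -/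
def IsFan (G : SimpleGraph V) (k : ℕ) (u : V) (Y : Set V) (F : Set V) : Prop :=
  ∃ (ends : Fin k → V) (P : ∀ i, G.Walk u (ends i)),
    (∀ i, (P i).IsPath) ∧ (∀ i, ends i ∈ Y) ∧ Function.Injective ends ∧
    (∀ i j, i ≠ j → ∀ x, x ∈ (P i).support → x ∈ (P j).support → x = u) ∧
    F = ⋃ i, {x | x ∈ (P i).support}

/-- `L` is the vertex set of a `k`-linkage from `x` to `y`: a union of `k` paths from
`x` to `y` pairwise sharing no vertices other than `x` and `y`. -/
def IsLinkage (G : SimpleGraph V) (k : ℕ) (x y : V) (L : Set V) : Prop :=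
  ∃ P : Fin k → G.Walk x y,
    (∀ i, (P i).IsPath) ∧ Function.Injective P ∧
    (∀ i j, i ≠ j → ∀ z, z ∈ (P i).support → z ∈ (P j).support → z = x ∨ z = y) ∧
    L = ⋃ i, {z | z ∈ (P i).support}

/-- The end represented by the ray `R` is `k`-padded: for every equivalent ray `R'`
there is a finite `S` such that every vertex of `C(S,R')` admits a `k`-fan to the
image of `R'` in `G`. -/
def IsPaddedEnd (G : SimpleGraph V) (k : ℕ) (R : ℕ → V) : Prop :=
  ∀ R' : ℕ → V, IsRay G R' → RayEquiv G R R' →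
    ∃ S : Set V, S.Finite ∧ ∀ v, InC G S R' v → ∃ F, IsFan G k v (Set.range R') F

/-- `G` is `k`-padded at infinity: every end of `G` is `k`-padded. -/
def PaddedAtInfinity (G : SimpleGraph V) (k : ℕ) : Prop :=
  ∀ R : ℕ → V, IsRay G R → IsPaddedEnd G k R

/-- `G` is `k`-connected: it has more than `k` vertices and deleting fewer than `k`
vertices leaves it connected. -/
def KConnected (G : SimpleGraph V) (k : ℕ) : Prop :=
  (k : ℕ∞) < (Set.univ : Set V).encard ∧
  ∀ S : Set V, S.Finite → S.ncard < k → (G.induce (Sᶜ : Set V)).Connected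

/-- The algebraic cycle space: edge sets meeting every vertex in an even number of edges. -/
def CAlg (G : SimpleGraph V) : Set (Set (Sym2 V)) :=
  {D | D ⊆ G.edgeSet ∧ ∀ v : V, {e ∈ D | v ∈ e}.Finite ∧ Even {e ∈ D | v ∈ e}.ncard}

/-- The finite-cycle space: symmetric-difference sums of finitely many finite circuits. -/
def CFin (G : SimpleGraph V) : Set (Set (Sym2 V)) :=
  {D | ∃ l : List (Set (Sym2 V)), (∀ C ∈ l, IsCircuit G C) ∧ D = l.foldr symmDiff ∅}

/-
Induction on `|F|`. A nonempty finite cut `F` contains a ⊆-minimal nonempty cut `M`, found among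
the finitely many subsets of `F`. Cuts are closed under symmetric difference, since
`E(A) Δ E(B) = E(A Δ B)`, so `F \ M = F Δ M` is a smaller cut; `D` meets `M` evenly by hypothesis
and `F \ M` evenly by induction, hence meets their disjoint union `F` evenly.
-/

lemma mem_cutEdges_iff {G : SimpleGraph V} {A : Set V} {a b : V} :
    s(a, b) ∈ cutEdges G A ↔ G.Adj a b ∧ Xor (a ∈ A) (b ∈ A) := by
  constructor
  · rintro ⟨x, y, hxy, hx, hy, he⟩
    rcases Sym2.eq_iff.mp he with ⟨rfl, rfl⟩ | ⟨rfl, rfl⟩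
    · exact ⟨hxy, Or.inl ⟨hx, hy⟩⟩
    · exact ⟨hxy.symm, Or.inr ⟨hx, hy⟩⟩
  · rintro ⟨hab, h | h⟩
    · exact ⟨a, b, hab, h.1, h.2, rfl⟩
    · exact ⟨b, a, hab.symm, h.1, h.2, Sym2.eq_swap⟩

lemma cutEdges_symmDiff (G : SimpleGraph V) (A B : Set V) :
    symmDiff (cutEdges G A) (cutEdges G B) = cutEdges G (symmDiff A B) := by
  ext e
  induction e using Sym2.ind with
  | _ a b =>
    simp only [mem_symmDiff, mem_cutEdges_iff, Xor]
    by_cases hab : G.Adj a b <;> by_cases ha : a ∈ A <;> by_cases hb : b ∈ A <;>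
      by_cases ha' : a ∈ B <;> by_cases hb' : b ∈ B <;> simp_all

lemma IsCut.sdiff {G : SimpleGraph V} {F M : Set (Sym2 V)} (hF : IsCut G F) (hM : IsCut G M)
    (hMF : M ⊆ F) : IsCut G (F \ M) := by
  obtain ⟨A, rfl⟩ := hF
  obtain ⟨B, rfl⟩ := hM
  exact ⟨symmDiff A B, by rw [← cutEdges_symmDiff, symmDiff_of_ge hMF]⟩

lemma IsCut.exists_minimal_subset {G : SimpleGraph V} {F : Set (Sym2 V)} (hF : IsCut G F)
    (hFfin : F.Finite) (hF0 : F ≠ ∅) : ∃ M ⊆ F, IsCut G M ∧ M ≠ ∅ ∧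
      ∀ N, IsCut G N → N ≠ ∅ → N ⊆ M → N = M := by
  have hfin : {M | M ⊆ F ∧ IsCut G M ∧ M ≠ ∅}.Finite :=
    hFfin.finite_subsets.subset fun _ hM => hM.1
  obtain ⟨M, ⟨hMF, hM, hM0⟩, hmin⟩ := hfin.exists_minimal ⟨F, subset_rfl, hF, hF0⟩
  exact ⟨M, hMF, hM, hM0, fun N hN hN0 hNM =>
    hNM.antisymm (hmin ⟨hNM.trans hMF, hN, hN0⟩ hNM)⟩

lemma EvenInter.union {D M N : Set (Sym2 V)} (hM : EvenInter D M) (hN : EvenInter D N)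
    (hMN : Disjoint M N) : EvenInter D (M ∪ N) := by
  have hdisj : Disjoint (D ∩ M) (D ∩ N) :=
    hMN.mono inter_subset_right inter_subset_right
  rw [EvenInter, inter_union_distrib_left, ncard_union_eq hdisj hM.1 hN.1]
  exact ⟨hM.1.union hN.1, hM.2.add hN.2⟩

theorem stmt_3_general (G : SimpleGraph V) (D : Set (Sym2 V))
    (h : ∀ M, IsCut G M → M.Finite → M ≠ ∅ →
      (∀ N, IsCut G N → N.Finite → N ≠ ∅ → N ⊆ M → N = M) → EvenInter D M) :
    ∀ F, IsCut G F → F.Finite → EvenInter D F := by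
  intro F hF hFfin
  induction hn : F.ncard using Nat.strong_induction_on generalizing F with
  | _ n IH =>
  by_cases hF0 : F = ∅
  · subst hF0
    simp [EvenInter]
  obtain ⟨M, hMF, hM, hM0, hmin⟩ := hF.exists_minimal_subset hFfin hF0
  have hDM : EvenInter D M :=
    h M hM (hFfin.subset hMF) hM0 fun N hN _ hN0 hNM => hmin N hN hN0 hNM
  have hlt : (F \ M).ncard < n :=
    hn ▸ ncard_lt_ncard (hMF.sdiff_ssubset_of_nonempty (nonempty_iff_ne_empty.mpr hM0)) hFfin
  have hDFM : EvenInter D (F \ M) := IH _ hlt _ (hF.sdiff hM hMF) hFfin.sdiff rfl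
  simpa [union_sdiff_cancel hMF] using hDM.union hDFM disjoint_sdiff_right

/-- If an edge set `D` has finite even intersection with every ⊆-minimal nonempty
finite cut of `G`, then it has finite even intersection with every finite cut of `G`. -/
theorem stmt_3 (G : SimpleGraph V) (D : Set (Sym2 V)) (hD : D ⊆ G.edgeSet)
    (h : ∀ M, IsCut G M → M.Finite → M ≠ ∅ →
      (∀ N, IsCut G N → N.Finite → N ≠ ∅ → N ⊆ M → N = M) → EvenInter D M) :
    ∀ F, IsCut G F → F.Finite → EvenInter D F :=
  stmt_3_general G D h
end

section
/- Let G be a locally finite simple graph. A nonempty edge set D in the algebraic cycle space C_alg(G) is ⊆-minimal among nonempty elements of C_alg(G) if and only if D is a finite circuit of G or D is the edge set of a double ray of G. -/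
open Set

variable {V : Type*}

/-!
If every vertex met by an edge set `D` meets exactly two edges of `D`, and `D` is connected,
as for a circuit or a double ray, then a nonempty `N ⊆ D` with even degrees that meets a vertex
must contain both `D`-edges there; connectivity spreads this to all of `D`, so `N = D`.

Conversely, in an element of the cycle space every edge entering a vertex can be continued by a
different edge. Starting from any edge and continuing in both directions gives a two-way infinite
walk in `D` that never turns back. If it is injective it is a double ray; otherwise a shortest
closed stretch of it is a cycle. Either edge set lies in the cycle space, so minimality of `D`
forces equality.
-/

open SimpleGraph

section EdgeSets

def IsTwoRegular (D : Set (Sym2 V)) : Prop :=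
  ∀ v, ∀ e ∈ D, v ∈ e → {e ∈ D | v ∈ e}.ncard = 2

def IsConnectedEdgeSet (D : Set (Sym2 V)) : Prop :=
  ∀ u v, (∃ e ∈ D, u ∈ e) → (∃ e ∈ D, v ∈ e) → (fromEdgeSet D).Reachable u v

variable {D N : Set (Sym2 V)}

lemma ncard_incidence_eq_ncard_setOf (D : Set (Sym2 V)) (v : V) :
    {e ∈ D | v ∈ e}.ncard = {w | s(v, w) ∈ D}.ncard := by
  have himage : {e ∈ D | v ∈ e} = (fun w => s(v, w)) '' {w | s(v, w) ∈ D} := by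
    ext e
    induction e using Sym2.ind with
    | _ x y =>
      constructor
      · rintro ⟨he, hv⟩
        rcases Sym2.mem_iff.mp hv with rfl | rfl
        exacts [⟨y, he, rfl⟩, ⟨x, by rwa [Set.mem_ofPred_eq, Sym2.eq_swap], Sym2.eq_swap⟩]
      · rintro ⟨w, hw, hwe⟩
        exact ⟨hwe ▸ hw, hwe ▸ Sym2.mem_mk_left _ _⟩
  rw [himage, Set.ncard_image_of_injective _ fun _ _ => Sym2.congr_right.mp]

lemma incidence_subset_of_even {u : V} (hND : N ⊆ D) (hD : {e ∈ D | u ∈ e}.ncard = 2)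
    (hN : Even {e ∈ N | u ∈ e}.ncard) (hu : ∃ e ∈ N, u ∈ e) :
    {e ∈ D | u ∈ e} ⊆ N := by
  have hsub : {e ∈ N | u ∈ e} ⊆ {e ∈ D | u ∈ e} := fun e he => ⟨hND he.1, he.2⟩
  have hDfin : {e ∈ D | u ∈ e}.Finite := Set.finite_of_ncard_ne_zero (by omega)
  have hN2 : {e ∈ N | u ∈ e}.ncard = 2 := by
    have hpos : 0 < {e ∈ N | u ∈ e}.ncard := (Set.ncard_pos (hDfin.subset hsub)).mpr hu
    have hle := Set.ncard_le_ncard hsub hDfin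
    obtain ⟨k, hk⟩ := hN
    omega
  have heq := Set.eq_of_subset_of_ncard_le hsub (by omega) hDfin
  exact heq ▸ fun e he => he.1

lemma mem_cAlg_of_isTwoRegular {G : SimpleGraph V} (hsub : D ⊆ G.edgeSet)
    (hD : IsTwoRegular D) : D ∈ CAlg G := by
  refine ⟨hsub, fun v => ?_⟩
  by_cases hv : ∃ e ∈ D, v ∈ e
  · obtain ⟨e, he, hve⟩ := hv
    have h2 := hD v e he hve
    exact ⟨Set.finite_of_ncard_ne_zero (by omega), h2 ▸ even_two⟩
  · push Not at hv
    have hempty : {e ∈ D | v ∈ e} = ∅ :=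
      Set.eq_empty_of_forall_notMem fun e he => hv e he.1 he.2
    simp [hempty]

lemma IsTwoRegular.eq_of_subset (hD : IsTwoRegular D) (hconn : IsConnectedEdgeSet D)
    (hN : ∀ v, Even {e ∈ N | v ∈ e}.ncard) (hNne : N.Nonempty) (hND : N ⊆ D) : N = D := by
  have hstep : ∀ u v, (fromEdgeSet D).Adj u v → (∃ e ∈ N, u ∈ e) → ∃ e ∈ N, v ∈ e := by
    rintro u v ⟨huv, -⟩ hu
    exact ⟨_, incidence_subset_of_even hND (hD u _ huv (Sym2.mem_mk_left _ _)) (hN u) hu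
      ⟨huv, Sym2.mem_mk_left _ _⟩, Sym2.mem_mk_right _ _⟩
  have hreach : ∀ u v, (fromEdgeSet D).Reachable u v → (∃ e ∈ N, u ∈ e) → ∃ e ∈ N, v ∈ e := by
    rintro u v ⟨w⟩ hu
    induction w with
    | nil => exact hu
    | cons hadj _ ih => exact ih (hstep _ _ hadj hu)
  refine hND.antisymm fun e he => ?_
  obtain ⟨f, hf⟩ := hNne
  have hfN : ∃ e ∈ N, f.out.1 ∈ e := ⟨f, hf, f.out_fst_mem⟩
  have hvN := hreach _ _ (hconn _ _ ⟨f, hND hf, f.out_fst_mem⟩ ⟨e, he, e.out_fst_mem⟩) hfN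
  exact incidence_subset_of_even hND (hD _ e he e.out_fst_mem) (hN _) hvN ⟨he, e.out_fst_mem⟩

lemma exists_ne_of_mem_cAlg {G : SimpleGraph V} (hD : D ∈ CAlg G) {u v : V}
    (h : s(u, v) ∈ D) : ∃ w ≠ u, s(v, w) ∈ D := by
  have hpos : 0 < {e ∈ D | v ∈ e}.ncard :=
    (Set.ncard_pos (hD.2 v).1).mpr ⟨_, h, Sym2.mem_mk_right _ _⟩
  have h2 : 1 < {e ∈ D | v ∈ e}.ncard := by
    obtain ⟨k, hk⟩ := (hD.2 v).2
    omega
  obtain ⟨e, ⟨he, hve⟩, hne⟩ := Set.exists_ne_of_one_lt_ncard h2 s(u, v)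
  obtain ⟨w, rfl⟩ := Sym2.mem_iff_exists.mp hve
  exact ⟨w, fun hwu => hne (by rw [hwu, Sym2.eq_swap]), he⟩

end EdgeSets

namespace SimpleGraph.Walk

variable {G : SimpleGraph V}

lemma reachable_fromEdgeSet {D : Set (Sym2 V)} {u v : V} (p : G.Walk u v)
    (hp : ∀ e ∈ p.edges, e ∈ D) : (fromEdgeSet D).Reachable u v :=
  ⟨p.transfer _ fun e he => by
    rw [edgeSet_fromEdgeSet]
    exact ⟨hp e he, G.not_isDiag_of_mem_edgeSet (p.edges_subset_edgeSet he)⟩⟩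

lemma isConnectedEdgeSet_edges {u v : V} (p : G.Walk u v) :
    IsConnectedEdgeSet {e | e ∈ p.edges} := by
  classical
  have hfrom : ∀ x ∈ p.support, (fromEdgeSet {e | e ∈ p.edges}).Reachable u x :=
    fun x hx => (p.takeUntil x hx).reachable_fromEdgeSet
      fun e he => p.edges_takeUntil_subset_edges hx he
  have hsupp : ∀ x, (∃ e ∈ {e | e ∈ p.edges}, x ∈ e) → x ∈ p.support := by
    rintro x ⟨e, he, hx⟩
    obtain ⟨y, rfl⟩ := Sym2.mem_iff_exists.mp hx
    exact p.fst_mem_support_of_mem_edges he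
  exact fun x y hx hy => (hfrom x (hsupp x hx)).symm.trans (hfrom y (hsupp y hy))

lemma IsCycle.isTwoRegular {u : V} {c : G.Walk u u} (hc : c.IsCycle) :
    IsTwoRegular {e | e ∈ c.edges} := by
  intro v e he hv
  obtain ⟨w, rfl⟩ := Sym2.mem_iff_exists.mp hv
  have hnbr : {w | s(v, w) ∈ {e | e ∈ c.edges}} = c.toSubgraph.neighborSet v := by
    ext w
    simp [adj_toSubgraph_iff_mem_edges]
  rw [ncard_incidence_eq_ncard_setOf, hnbr]
  exact hc.ncard_neighborSet_toSubgraph_eq_two (c.fst_mem_support_of_mem_edges he)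

def ofSeq (q : ℕ → V) (hq : ∀ k, G.Adj (q k) (q (k + 1))) :
    (n : ℕ) → G.Walk (q 0) (q n)
  | 0 => nil
  | n + 1 => cons (hq 0) (ofSeq (fun k => q (k + 1)) (fun k => hq (k + 1)) n)

variable {q : ℕ → V} {hq : ∀ k, G.Adj (q k) (q (k + 1))}

lemma length_ofSeq (n : ℕ) : (ofSeq q hq n).length = n := by
  induction n generalizing q with
  | zero => rfl
  | succ n ih => simp [ofSeq, ih]

lemma support_ofSeq (n : ℕ) : (ofSeq q hq n).support = (List.range (n + 1)).map q := by
  induction n generalizing q with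
  | zero => rfl
  | succ n ih => rw [ofSeq, support_cons, ih, List.range_succ_eq_map (n := n + 1)]; simp

lemma exists_eq_of_mem_edges_ofSeq {n : ℕ} {e : Sym2 V} (he : e ∈ (ofSeq q hq n).edges) :
    ∃ k, e = s(q k, q (k + 1)) := by
  induction n generalizing q with
  | zero => simp [ofSeq] at he
  | succ n ih =>
    rcases List.mem_cons.mp he with rfl | he
    · exact ⟨0, rfl⟩
    · obtain ⟨k, rfl⟩ := ih he
      exact ⟨k + 1, rfl⟩

lemma isCycle_ofSeq_copy {n : ℕ} (hn : 3 ≤ n) (hqn : q n = q 0)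
    (hinj : Set.InjOn q (Set.Icc 1 n)) : ((ofSeq q hq n).copy rfl hqn).IsCycle := by
  rw [isCycle_iff_isPath_tail_and_le_length, isPath_def, support_tail_of_not_nil _ (by
    rw [← length_eq_zero_iff, length_copy, length_ofSeq]; omega), support_copy, support_ofSeq,
    length_copy, length_ofSeq, List.range_succ_eq_map, List.map_cons, List.tail_cons,
    List.map_map]
  refine ⟨List.Nodup.map_on (fun a ha b hb hab => ?_) List.nodup_range, hn⟩
  rw [List.mem_range] at ha hb
  exact Nat.succ_injective (hinj ⟨by omega, by omega⟩ ⟨by omega, by omega⟩ hab)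

end SimpleGraph.Walk

section DoubleRays

variable {R : ℤ → V}

lemma exists_eq_of_mem_doubleRayEdges {v : V} (hv : ∃ e ∈ doubleRayEdges R, v ∈ e) :
    ∃ n, v = R n := by
  obtain ⟨_, ⟨m, rfl⟩, hv⟩ := hv
  rcases Sym2.mem_iff.mp hv with rfl | rfl
  exacts [⟨m, rfl⟩, ⟨m + 1, rfl⟩]

lemma incidence_doubleRayEdges (hR : Function.Injective R) (n : ℤ) :
    {e ∈ doubleRayEdges R | R n ∈ e} = {s(R (n - 1), R n), s(R n, R (n + 1))} := by
  ext e
  constructor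
  · rintro ⟨⟨m, rfl⟩, hm⟩
    rcases Sym2.mem_iff.mp hm with h | h
    · rw [hR h]
      exact Or.inr rfl
    · rw [show m = n - 1 by have := hR h; omega, sub_add_cancel]
      exact Or.inl rfl
  · rintro (rfl | rfl)
    · exact ⟨⟨n - 1, by rw [sub_add_cancel]⟩, Sym2.mem_mk_right _ _⟩
    · exact ⟨⟨n, rfl⟩, Sym2.mem_mk_left _ _⟩

lemma isTwoRegular_doubleRayEdges (hR : Function.Injective R) :
    IsTwoRegular (doubleRayEdges R) := by
  intro v e he hv
  obtain ⟨n, rfl⟩ := exists_eq_of_mem_doubleRayEdges ⟨e, he, hv⟩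
  rw [incidence_doubleRayEdges hR, Set.ncard_pair]
  intro h
  rcases Sym2.eq_iff.mp h with ⟨h1, -⟩ | ⟨h1, -⟩
  · have := hR h1; omega
  · have := hR h1; omega

lemma isConnectedEdgeSet_doubleRayEdges (hR : Function.Injective R) :
    IsConnectedEdgeSet (doubleRayEdges R) := by
  have hadj : ∀ n, (fromEdgeSet (doubleRayEdges R)).Adj (R n) (R (n + 1)) := fun n => by
    rw [fromEdgeSet_adj]
    exact ⟨⟨n, rfl⟩, hR.ne (by omega)⟩
  have hreach : ∀ n, (fromEdgeSet (doubleRayEdges R)).Reachable (R 0) (R n) := by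
    intro n
    induction n using Int.induction_on with
    | zero => rfl
    | succ n ih => exact ih.trans (hadj n).reachable
    | pred n ih => exact ih.trans (by simpa using (hadj (-n - 1)).symm.reachable)
  intro u v hu hv
  obtain ⟨m, rfl⟩ := exists_eq_of_mem_doubleRayEdges hu
  obtain ⟨n, rfl⟩ := exists_eq_of_mem_doubleRayEdges hv
  exact (hreach m).symm.trans (hreach n)

end DoubleRays

section Nonbacktracking

variable {D : Set (Sym2 V)}

lemma exists_nonbacktracking_nat (hD : ∀ u v, s(u, v) ∈ D → ∃ w ≠ u, s(v, w) ∈ D) {a b : V}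
    (hab : s(a, b) ∈ D) :
    ∃ f : ℕ → V, f 0 = a ∧ f 1 = b ∧ (∀ k, s(f k, f (k + 1)) ∈ D) ∧ ∀ k, f (k + 2) ≠ f k := by
  choose! next hne hmem using hD
  let step : V × V → V × V := fun p => (p.2, next p.1 p.2)
  have hstep : ∀ k, s((step^[k] (a, b)).1, (step^[k] (a, b)).2) ∈ D := by
    intro k
    induction k with
    | zero => exact hab
    | succ k ih => rw [Function.iterate_succ_apply']; exact hmem _ _ ih
  refine ⟨fun k => (step^[k] (a, b)).1, rfl, rfl, fun k => ?_, fun k => ?_⟩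
  · simp only [Function.iterate_succ_apply']
    exact hstep k
  · simp only [Function.iterate_succ_apply']
    exact hne _ _ (hstep k)

lemma exists_nonbacktracking_int (hD : ∀ u v, s(u, v) ∈ D → ∃ w ≠ u, s(v, w) ∈ D) {a b : V}
    (hab : s(a, b) ∈ D) :
    ∃ h : ℤ → V, (∀ i, s(h i, h (i + 1)) ∈ D) ∧ ∀ i, h (i + 2) ≠ h i := by
  obtain ⟨f, hf0, hf1, hfD, hfne⟩ := exists_nonbacktracking_nat hD hab
  obtain ⟨g, hg0, hg1, hgD, hgne⟩ := exists_nonbacktracking_nat hD (Sym2.eq_swap ▸ hab)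
  -- `g` runs from `b` back through `a`, so it supplies the indices `i ≤ 1` as `g (1 - i)`.
  let h : ℤ → V := fun i => if 0 ≤ i then f i.toNat else g (1 - i).toNat
  have hf : ∀ i, 0 ≤ i → h i = f i.toNat := fun i hi => if_pos hi
  have hg : ∀ i, i ≤ 1 → h i = g (1 - i).toNat := by
    intro i hi
    rcases lt_or_ge i 0 with hi0 | hi0
    · exact if_neg (by omega)
    · obtain rfl | rfl : i = 0 ∨ i = 1 := by omega
      exacts [hf0.trans hg1.symm, hf1.trans hg0.symm]
  refine ⟨h, fun i => ?_, fun i => ?_⟩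
  · rcases le_or_gt 0 i with hi | hi
    · rw [hf i hi, hf (i + 1) (by omega), show (i + 1).toNat = i.toNat + 1 by omega]
      exact hfD _
    · rw [hg i (by omega), hg (i + 1) (by omega),
        show (1 - i).toNat = (1 - (i + 1)).toNat + 1 by omega, Sym2.eq_swap]
      exact hgD _
  · rcases le_or_gt 0 i with hi | hi
    · rw [hf i hi, hf (i + 2) (by omega), show (i + 2).toNat = i.toNat + 2 by omega]
      exact hfne _
    · rw [hg i (by omega), hg (i + 2) (by omega),
        show (1 - i).toNat = (1 - (i + 2)).toNat + 2 by omega]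
      exact (hgne _).symm

lemma exists_shortest_return {h : ℤ → V} (hh : ¬ Function.Injective h) :
    ∃ i, ∃ n : ℕ, 0 < n ∧ h (i + n) = h i ∧ Set.InjOn (fun k : ℕ => h (i + k)) (Set.Icc 1 n) := by
  classical
  have hrep : ∃ n : ℕ, 0 < n ∧ ∃ i, h (i + n) = h i := by
    obtain ⟨i, j, hij, hne⟩ : ∃ i j, h i = h j ∧ i ≠ j := by
      simpa [Function.Injective] using hh
    rcases hne.lt_or_gt with hlt | hlt
    · exact ⟨(j - i).toNat, by omega, i, by rw [show i + ((j - i).toNat : ℤ) = j by omega, hij]⟩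
    · exact ⟨(i - j).toNat, by omega, j, by rw [show j + ((i - j).toNat : ℤ) = i by omega, hij]⟩
  obtain ⟨hpos, i, hi⟩ := Nat.find_spec hrep
  set n := Nat.find hrep
  have hmin : ∀ m < n, 0 < m → ∀ j, h (j + m) ≠ h j := fun m hm hm0 j hj =>
    Nat.find_min hrep hm ⟨hm0, j, hj⟩
  have hlt : ∀ a b : ℕ, 1 ≤ a → a < b → b ≤ n → h (i + a) ≠ h (i + b) :=
    fun a b ha hab hb habq => hmin (b - a) (by omega) (by omega) (i + a) (by
      rw [show i + a + ((b - a : ℕ) : ℤ) = i + b by omega]; exact habq.symm)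
  refine ⟨i, n, hpos, hi, fun a ha b hb hab => ?_⟩
  by_contra hne
  rcases Nat.lt_or_gt_of_ne hne with hab' | hab'
  exacts [hlt a b ha.1 hab' hb.2 hab, hlt b a hb.1 hab' ha.2 hab.symm]

lemma exists_isCycle_of_not_injective {G : SimpleGraph V} {h : ℤ → V}
    (hadj : ∀ i, G.Adj (h i) (h (i + 1))) (hnb : ∀ i, h (i + 2) ≠ h i)
    (hh : ¬ Function.Injective h) :
    ∃ v, ∃ c : G.Walk v v, c.IsCycle ∧ ∀ e ∈ c.edges, ∃ i, e = s(h i, h (i + 1)) := by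
  obtain ⟨i, n, hpos, hi, hinj⟩ := exists_shortest_return hh
  have h3 : 3 ≤ n := by
    have h1 : n ≠ 1 := fun h1 => (hadj i).ne (by rw [h1] at hi; exact_mod_cast hi.symm)
    have h2 : n ≠ 2 := fun h2 => hnb i (by rw [h2] at hi; exact_mod_cast hi)
    omega
  let q : ℕ → V := fun k => h (i + k)
  have hq : ∀ k, G.Adj (q k) (q (k + 1)) := fun k => by simpa [q, add_assoc] using hadj (i + k)
  have hqn : q n = q 0 := by simpa [q] using hi
  refine ⟨q 0, _, Walk.isCycle_ofSeq_copy (hq := hq) h3 hqn hinj, fun e he => ?_⟩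
  rw [Walk.edges_copy] at he
  obtain ⟨k, rfl⟩ := Walk.exists_eq_of_mem_edges_ofSeq he
  exact ⟨i + k, by simp [q, add_assoc]⟩

end Nonbacktracking

lemma exists_subset_isCircuit_or_isDoubleRayEdgeSet {G : SimpleGraph V} {D : Set (Sym2 V)}
    (hD : D ∈ CAlg G) (hne : D.Nonempty) :
    ∃ C ⊆ D, C ∈ CAlg G ∧ C.Nonempty ∧ (IsCircuit G C ∨ IsDoubleRayEdgeSet G C) := by
  obtain ⟨⟨a, b⟩, he⟩ := hne
  obtain ⟨h, hhD, hnb⟩ := exists_nonbacktracking_int (fun _ _ => exists_ne_of_mem_cAlg hD) he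
  have hadj : ∀ i, G.Adj (h i) (h (i + 1)) := fun i => hD.1 (hhD i)
  by_cases hinj : Function.Injective h
  · have hsub : doubleRayEdges h ⊆ D := by
      rintro _ ⟨i, rfl⟩
      exact hhD i
    exact ⟨_, hsub, mem_cAlg_of_isTwoRegular (hsub.trans hD.1) (isTwoRegular_doubleRayEdges hinj),
      ⟨_, 0, rfl⟩, Or.inr ⟨h, ⟨hinj, hadj⟩, rfl⟩⟩
  · obtain ⟨v, c, hc, hcD⟩ := exists_isCycle_of_not_injective hadj hnb hinj
    have hsub : {e | e ∈ c.edges} ⊆ D := fun e he => by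
      obtain ⟨i, rfl⟩ := hcD e he
      exact hhD i
    exact ⟨_, hsub, mem_cAlg_of_isTwoRegular (hsub.trans hD.1) hc.isTwoRegular,
      List.exists_mem_of_ne_nil _ (Walk.edges_eq_nil.not.mpr hc.not_nil), Or.inl ⟨v, c, hc, rfl⟩⟩

theorem stmt_12_general (G : SimpleGraph V)
    (D : Set (Sym2 V)) (hD : D ∈ CAlg G) (hne : D ≠ ∅) :
    (∀ N ∈ CAlg G, N ≠ ∅ → N ⊆ D → N = D) ↔
      (IsCircuit G D ∨ IsDoubleRayEdgeSet G D) := by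
  constructor
  · intro hmin
    obtain ⟨C, hCD, hC, hCne, hCkind⟩ :=
      exists_subset_isCircuit_or_isDoubleRayEdgeSet hD (Set.nonempty_iff_ne_empty.mpr hne)
    rwa [← hmin C hC hCne.ne_empty hCD]
  · rintro (⟨v, c, hc, rfl⟩ | ⟨R, ⟨hR, -⟩, rfl⟩) N hN hNne hND
    · exact hc.isTwoRegular.eq_of_subset c.isConnectedEdgeSet_edges (fun v => (hN.2 v).2)
        (Set.nonempty_iff_ne_empty.mpr hNne) hND
    · exact (isTwoRegular_doubleRayEdges hR).eq_of_subset (isConnectedEdgeSet_doubleRayEdges hR)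
        (fun v => (hN.2 v).2) (Set.nonempty_iff_ne_empty.mpr hNne) hND

/-- In a locally finite graph, a nonempty element of the algebraic cycle space is
⊆-minimal among nonempty elements iff it is a finite circuit or the edge set of a
double ray. -/
theorem stmt_12 (G : SimpleGraph V) (hlf : ∀ x : V, (G.neighborSet x).Finite)
    (D : Set (Sym2 V)) (hD : D ∈ CAlg G) (hne : D ≠ ∅) :
    (∀ N ∈ CAlg G, N ≠ ∅ → N ⊆ D → N = D) ↔
      (IsCircuit G D ∨ IsDoubleRayEdgeSet G D) :=
  stmt_12_general G D hD hne
end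

section
/- Let G be a locally finite simple graph, let D be an element of the algebraic cycle space C_alg(G), and let e ∈ D. Then there is a finite circuit C of G with e ∈ C ⊆ D, or there is a double ray of G whose edge set D' satisfies e ∈ D' ⊆ D. -/
/-
If `e = ab` lies on a cycle of the graph `H` with edge set `D`, that cycle is the circuit.
Otherwise `e` is a bridge of `H`. The side of `a` in `H - e` is then infinite: if it were finite,
it would be a finite graph in which `a` is the only vertex of odd degree, which the handshake
lemma rules out. The same holds for `b`. Both sides are locally finite, so each contains a ray
starting at its end of `e` (Kőnig's lemma, run along shortest walks), and `e` joins these two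
disjoint rays into a double ray.
-/

open Set

variable {V : Type*}

namespace SimpleGraph

variable {G H : SimpleGraph V}

lemma edgeSet_fromEdgeSet_of_subset {D : Set (Sym2 V)} (hD : D ⊆ G.edgeSet) :
    (fromEdgeSet D).edgeSet = D := by
  rw [edgeSet_fromEdgeSet, sdiff_eq_left]
  exact Set.disjoint_left.mpr fun _ he => G.not_isDiag_of_mem_edgeSet (hD he)

lemma incidenceSet_fromEdgeSet_of_subset {D : Set (Sym2 V)} (hD : D ⊆ G.edgeSet) (v : V) :
    (fromEdgeSet D).incidenceSet v = {e ∈ D | v ∈ e} := by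
  rw [incidenceSet, edgeSet_fromEdgeSet_of_subset hD]

lemma ncard_neighborSet_eq_ncard_incidenceSet (v : V) :
    (H.neighborSet v).ncard = (H.incidenceSet v).ncard := by
  classical
  rw [← Nat.card_coe_set_eq, ← Nat.card_coe_set_eq,
    Nat.card_congr (H.incidenceSetEquivNeighborSet v)]

lemma finite_neighborSet_iff_finite_incidenceSet (v : V) :
    (H.neighborSet v).Finite ↔ (H.incidenceSet v).Finite := by
  classical
  simpa only [Set.finite_coe_iff] using (H.incidenceSetEquivNeighborSet v).finite_iff.symm

lemma finite_neighborSet_fromEdgeSet_of_mem_cAlg {D : Set (Sym2 V)} (hD : D ∈ CAlg G) (v : V) :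
    ((fromEdgeSet D).neighborSet v).Finite := by
  rw [finite_neighborSet_iff_finite_incidenceSet, incidenceSet_fromEdgeSet_of_subset hD.1]
  exact (hD.2 v).1

lemma even_ncard_neighborSet_fromEdgeSet_of_mem_cAlg {D : Set (Sym2 V)} (hD : D ∈ CAlg G)
    (v : V) : Even ((fromEdgeSet D).neighborSet v).ncard := by
  rw [ncard_neighborSet_eq_ncard_incidenceSet, incidenceSet_fromEdgeSet_of_subset hD.1]
  exact (hD.2 v).2

lemma degree_induce_eq_ncard_neighborSet [DecidableRel H.Adj] {K : Set V} [Fintype K] (v : K)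
    (hv : H.neighborSet v ⊆ K) : (H.induce K).degree v = (H.neighborSet v).ncard := by
  rw [← card_neighborSet_eq_degree, ← Nat.card_eq_fintype_card, Nat.card_coe_set_eq,
    neighborSet_induce, Set.ncard_preimage_of_injective_subset_range Subtype.val_injective
      (by rwa [Subtype.range_coe])]

/-- The handshake lemma, applied to the component of `a` were it finite. -/
theorem infinite_setOf_reachable_of_odd {a : V} (ha : Odd (H.neighborSet a).ncard)
    (heven : ∀ v, H.Reachable a v → v ≠ a → Even (H.neighborSet v).ncard) :
    {v | H.Reachable a v}.Infinite := by
  classical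
  intro hfin
  set K := {v | H.Reachable a v}
  have hclosed : ∀ v ∈ K, H.neighborSet v ⊆ K := fun v hv w hw => hv.trans (Adj.reachable hw)
  have : Fintype K := hfin.fintype
  have hdeg (v : K) := degree_induce_eq_ncard_neighborSet v (hclosed v v.2)
  obtain ⟨w, hwa, hw⟩ := (H.induce K).exists_ne_odd_degree_of_exists_odd_degree
    ⟨a, Reachable.refl a⟩ (by rwa [hdeg])
  rw [hdeg, ← Nat.not_even_iff_odd] at hw
  exact hw (heven w w.2 fun h => hwa (Subtype.ext h))

theorem IsBridge.infinite_setOf_reachable_deleteEdges {a b : V}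
    (hfin : (H.neighborSet a).Finite) (heven : ∀ v, Even (H.neighborSet v).ncard)
    (hab : H.Adj a b) (hbr : H.IsBridge s(a, b)) :
    {v | (H.deleteEdges {s(a, b)}).Reachable a v}.Infinite := by
  refine infinite_setOf_reachable_of_odd ?_ fun v hv hva => ?_
  · have hN : (H.deleteEdges {s(a, b)}).neighborSet a = H.neighborSet a \ {b} := by
      ext w
      simp [hab.ne, and_comm]
    rw [hN, Set.ncard_sdiff_singleton_of_mem (s := H.neighborSet a) hab]
    obtain ⟨k, hk⟩ := heven a
    have hpos := (Set.ncard_pos hfin).mpr ⟨b, hab⟩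
    exact ⟨k - 1, by omega⟩
  · have hvb : v ≠ b := by
      rintro rfl
      exact isBridge_iff.mp hbr hv
    have hN : (H.deleteEdges {s(a, b)}).neighborSet v = H.neighborSet v := by
      ext w
      simp [hva, hvb]
    rw [hN]
    exact heven v

end SimpleGraph

open SimpleGraph

section Rays

variable {G G' : SimpleGraph V}

lemma IsRay.mono (hle : G ≤ G') {R : ℕ → V} (hR : IsRay G R) : IsRay G' R :=
  ⟨hR.1, fun n => hle (hR.2 n)⟩

lemma IsRay.reachable {R : ℕ → V} (hR : IsRay G R) (n : ℕ) : G.Reachable (R 0) (R n) := by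
  induction n with
  | zero => rfl
  | succ n ih => exact ih.trans (hR.2 n).reachable

lemma IsDoubleRay.mono (hle : G ≤ G') {R : ℤ → V} (hR : IsDoubleRay G R) : IsDoubleRay G' R :=
  ⟨hR.1, fun n => hle (hR.2 n)⟩

lemma IsDoubleRay.doubleRayEdges_subset {R : ℤ → V} (hR : IsDoubleRay G R) :
    doubleRayEdges R ⊆ G.edgeSet := by
  rintro _ ⟨n, rfl⟩
  exact hR.2 n

def geodesicShadow (G : SimpleGraph V) (a v : V) : Set V :=
  {u | G.Reachable v u ∧ G.dist a v + G.dist v u = G.dist a u}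

lemma geodesicShadow_self (a : V) : geodesicShadow G a a = {u | G.Reachable a u} := by
  simp [geodesicShadow]

/-- Every `u ≠ v` in the shadow of `v` is in the shadow of the next vertex `w` on a shortest
`v`–`u` walk, and then `w` is one step further from `a` than `v`. -/
lemma exists_adj_dist_succ_infinite_geodesicShadow {a v : V} (hfin : (G.neighborSet v).Finite)
    (hav : G.Reachable a v) (hinf : (geodesicShadow G a v).Infinite) :
    ∃ w, G.Adj v w ∧ G.dist a w = G.dist a v + 1 ∧ (geodesicShadow G a w).Infinite := by
  have hcover : geodesicShadow G a v \ {v} ⊆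
      ⋃ w ∈ {w ∈ G.neighborSet v | G.dist a w = G.dist a v + 1}, geodesicShadow G a w := by
    rintro u ⟨⟨hvu, hu⟩, huv⟩
    obtain ⟨p, hp⟩ := hvu.exists_walk_length_eq_dist
    cases p with
    | nil => exact absurd rfl huv
    | @cons _ w _ hvw q =>
      have hwu := G.dist_le q
      have hvw' : G.dist v w ≤ 1 := by simpa using G.dist_le (Walk.cons hvw Walk.nil)
      have haw := hav.dist_triangle_left (v := v) w
      have hau := (hav.trans hvw.reachable).dist_triangle_left u
      rw [Walk.length_cons] at hp
      exact Set.mem_biUnion ⟨hvw, by omega⟩ ⟨q.reachable, by omega⟩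
  by_contra! h
  refine (hinf.sdiff (Set.finite_singleton v)) (Set.Finite.subset ?_ hcover)
  exact (hfin.subset (Set.sep_subset _ _)).biUnion fun w hw => h w hw.1 hw.2

theorem exists_isRay_of_infinite_setOf_reachable (hfin : ∀ v, (G.neighborSet v).Finite) (a : V)
    (hinf : {u | G.Reachable a u}.Infinite) : ∃ R, IsRay G R ∧ R 0 = a := by
  have step : ∀ v, G.Reachable a v ∧ (geodesicShadow G a v).Infinite →
      ∃ w, G.Adj v w ∧ G.dist a w = G.dist a v + 1 ∧
        G.Reachable a w ∧ (geodesicShadow G a w).Infinite := by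
    rintro v ⟨hav, hv⟩
    obtain ⟨w, hvw, hdist, hw⟩ := exists_adj_dist_succ_infinite_geodesicShadow (hfin v) hav hv
    exact ⟨w, hvw, hdist, hav.trans hvw.reachable, hw⟩
  choose! next hadj hdist hgood using step
  let R : ℕ → V := fun n => next^[n] a
  have hR : ∀ n, (G.Reachable a (R n) ∧ (geodesicShadow G a (R n)).Infinite) ∧
      G.dist a (R n) = n := by
    intro n
    induction n with
    | zero =>
      refine ⟨⟨.refl a, ?_⟩, dist_self⟩
      rwa [show R 0 = a from rfl, geodesicShadow_self]
    | succ n ih =>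
      simp only [R, Function.iterate_succ_apply'] at ih ⊢
      exact ⟨hgood _ ih.1, by rw [hdist _ ih.1, ih.2]⟩
  refine ⟨R, ⟨fun m n hmn => ?_, fun n => ?_⟩, rfl⟩
  · rw [← (hR m).2, ← (hR n).2, hmn]
  · simpa only [R, Function.iterate_succ_apply'] using hadj _ (hR n).1

def joinRays (Ra Rb : ℕ → V) : ℤ → V
  | .ofNat n => Rb n
  | .negSucc n => Ra n

lemma isDoubleRay_joinRays {Ra Rb : ℕ → V} (ha : IsRay G Ra) (hb : IsRay G Rb)
    (hab : G.Adj (Ra 0) (Rb 0)) (hdisj : ∀ m n, Ra m ≠ Rb n) :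
    IsDoubleRay G (joinRays Ra Rb) := by
  refine ⟨?_, ?_⟩
  · rintro (m | m) (n | n) h <;> simp only [joinRays] at h
    · rw [hb.1 h]
    · exact absurd h.symm (hdisj _ _)
    · exact absurd h (hdisj _ _)
    · rw [ha.1 h]
  · rintro (n | _ | n)
    · exact hb.2 n
    · exact hab
    · exact (ha.2 n).symm

lemma mem_doubleRayEdges_joinRays (Ra Rb : ℕ → V) :
    s(Ra 0, Rb 0) ∈ doubleRayEdges (joinRays Ra Rb) :=
  ⟨-1, rfl⟩

theorem SimpleGraph.IsBridge.exists_isDoubleRay {a b : V} (hfin : ∀ v, (G.neighborSet v).Finite)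
    (heven : ∀ v, Even (G.neighborSet v).ncard) (hab : G.Adj a b) (hbr : G.IsBridge s(a, b)) :
    ∃ R, IsDoubleRay G R ∧ s(a, b) ∈ doubleRayEdges R := by
  set G' := G.deleteEdges {s(a, b)}
  have hG' : ∀ v, (G'.neighborSet v).Finite :=
    fun v => (hfin v).subset fun _ hw => deleteEdges_le _ hw
  have hbr' : G.IsBridge s(b, a) := Sym2.eq_swap ▸ hbr
  have hswap : G.deleteEdges {s(b, a)} = G' := by rw [Sym2.eq_swap]
  obtain ⟨Ra, hRa, rfl⟩ := exists_isRay_of_infinite_setOf_reachable hG' a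
    (hbr.infinite_setOf_reachable_deleteEdges (hfin _) heven hab)
  obtain ⟨Rb, hRb, rfl⟩ := exists_isRay_of_infinite_setOf_reachable hG' b
    (hswap ▸ hbr'.infinite_setOf_reachable_deleteEdges (hfin _) heven hab.symm)
  have hdisj : ∀ m n, Ra m ≠ Rb n := by
    intro m n h
    have hb := (hRb.reachable n).symm
    rw [← h] at hb
    exact isBridge_iff.mp hbr ((hRa.reachable m).trans hb)
  exact ⟨_, isDoubleRay_joinRays (hRa.mono (deleteEdges_le _)) (hRb.mono (deleteEdges_le _))
    hab hdisj, mem_doubleRayEdges_joinRays Ra Rb⟩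

end Rays

lemma isCircuit_of_isCycle {G H : SimpleGraph V} (hle : H ≤ G) {u : V} {p : H.Walk u u}
    (hp : p.IsCycle) : IsCircuit G {e | e ∈ p.edges} :=
  ⟨u, p.mapLe hle, hp.mapLe hle, by rw [Walk.edges_mapLe_eq_edges]⟩

theorem stmt_14_general (G : SimpleGraph V)
    (D : Set (Sym2 V)) (hD : D ∈ CAlg G) (e : Sym2 V) (he : e ∈ D) :
    (∃ C, IsCircuit G C ∧ e ∈ C ∧ C ⊆ D) ∨
      (∃ D', IsDoubleRayEdgeSet G D' ∧ e ∈ D' ∧ D' ⊆ D) := by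
  set H := fromEdgeSet D
  have hHG : H ≤ G := by
    rw [fromEdgeSet_le]
    exact Set.sdiff_subset.trans hD.1
  have hHD : H.edgeSet = D := edgeSet_fromEdgeSet_of_subset hD.1
  have heH : e ∈ H.edgeSet := hHD ▸ he
  obtain ⟨a, b⟩ := e
  by_cases hbr : H.IsBridge s(a, b)
  · right
    obtain ⟨R, hR, heR⟩ := hbr.exists_isDoubleRay
      (finite_neighborSet_fromEdgeSet_of_mem_cAlg hD)
      (even_ncard_neighborSet_fromEdgeSet_of_mem_cAlg hD) heH
    exact ⟨_, ⟨R, hR.mono hHG, rfl⟩, heR, hHD ▸ hR.doubleRayEdges_subset⟩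
  · left
    obtain ⟨u, p, hp, hep⟩ : ∃ u, ∃ p : H.Walk u u, p.IsCycle ∧ s(a, b) ∈ p.edges := by
      simpa [isBridge_iff_forall_cycle_notMem heH] using hbr
    exact ⟨_, isCircuit_of_isCycle hHG hp, hep, fun _ he' => hHD ▸ p.edges_subset_edgeSet he'⟩

/-- In a locally finite graph, every edge of an element `D` of the algebraic cycle
space lies in a finite circuit contained in `D` or in the edge set of a double ray
contained in `D`. -/
theorem stmt_14 (G : SimpleGraph V) (hlf : ∀ x : V, (G.neighborSet x).Finite)
    (D : Set (Sym2 V)) (hD : D ∈ CAlg G) (e : Sym2 V) (he : e ∈ D) :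
    (∃ C, IsCircuit G C ∧ e ∈ C ∧ C ⊆ D) ∨
      (∃ D', IsDoubleRayEdgeSet G D' ∧ e ∈ D' ∧ D' ⊆ D) :=
  stmt_14_general G D hD e he
end

section
/- Let G be a connected locally finite simple graph and let D ⊆ E(G) be an edge set whose intersection with every bond of G is finite and of even cardinality. Then D is the union of a pairwise disjoint (countable) family of finite circuits of G. -/
open Set

variable {V : Type*}

/-! Every edge `e` of `D` lies on a finite circuit inside `D`: otherwise `e` is a bridge of the
spanning subgraph with edge set `D`, so some cut `E(A, V∖A)` meets `D` exactly in `e`, and `e`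
lies on a bond inside that cut, contradicting the parity hypothesis. Removing disjoint circuits
preserves the parity of the intersection with every bond (circuits meet every cut evenly), so a
maximal disjoint family of circuits inside `D` covers `D`. It is countable because `G`, being
connected and locally finite, has countably many vertices. -/

open SimpleGraph

namespace SimpleGraph

variable {G : SimpleGraph V}

theorem Reachable.mem_of_forall_adj {S : Set V} {a v : V} (h : G.Reachable a v) (ha : a ∈ S)
    (hS : ∀ u w, G.Adj u w → u ∈ S → w ∈ S) : v ∈ S := by
  by_contra hv
  obtain ⟨d, -, hd, hd'⟩ := h.some.exists_boundary_dart S ha hv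
  exact hd' (hS _ _ d.adj hd)

theorem Preconnected.countable_of_finite_neighborSet (hG : G.Preconnected)
    (hlf : ∀ v, (G.neighborSet v).Finite) : Countable V := by
  rcases isEmpty_or_nonempty V with _ | ⟨⟨r⟩⟩
  · infer_instance
  let ball : ℕ → Set V := fun n => Nat.rec {r} (fun _ B => B ∪ ⋃ u ∈ B, G.neighborSet u) n
  have hfin : ∀ n, (ball n).Finite := fun n => by
    induction n with
    | zero => exact finite_singleton r
    | succ n ih => exact ih.union (ih.biUnion fun u _ => hlf u)
  have hcover : ∀ v, v ∈ ⋃ n, ball n := fun v =>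
    (hG r v).mem_of_forall_adj (mem_iUnion.2 ⟨0, rfl⟩) fun u w huw hu => by
      obtain ⟨n, hn⟩ := mem_iUnion.1 hu
      exact mem_iUnion.2 ⟨n + 1, Or.inr (mem_biUnion hn huw)⟩
  rw [← countable_univ_iff, ← eq_univ_of_forall hcover]
  exact countable_iUnion fun n => (hfin n).countable

end SimpleGraph

theorem Set.PairwiseDisjoint.countable_of_nonempty {α : Type*} {I : Set (Set α)}
    (hI : I.PairwiseDisjoint id) (hne : ∀ C ∈ I, C.Nonempty) (hcount : (⋃₀ I).Countable) :
    I.Countable := by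
  have := hcount.to_subtype
  let pt : I → ⋃₀ I := fun C => ⟨(hne C C.2).some, C, C.2, (hne C C.2).some_mem⟩
  refine countable_coe_iff.1 (Function.Injective.countable (f := pt) fun C C' hCC' => ?_)
  by_contra hCC
  have hmem : (hne C C.2).some ∈ (C' : Set α) := by
    rw [show (hne C C.2).some = (hne C' C'.2).some from congrArg Subtype.val hCC']
    exact (hne C' C'.2).some_mem
  exact disjoint_left.1 (hI C.2 C'.2 (Subtype.coe_ne_coe.2 hCC)) (hne C C.2).some_mem hmem

theorem even_ncard_sdiff_sUnion_iff {α : Type*} {F : Set α} (hF : F.Finite) {I : Set (Set α)}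
    (hI : I.PairwiseDisjoint id) (heven : ∀ C ∈ I, Even (C ∩ F).ncard) :
    Even (F \ ⋃₀ I).ncard ↔ Even F.ncard := by
  induction hn : F.ncard using Nat.strong_induction_on generalizing F with
  | _ n ih =>
  by_cases hmeet : ∃ C ∈ I, (C ∩ F).Nonempty
  · obtain ⟨C, hC, hCF⟩ := hmeet
    have hsplit := ncard_inter_add_ncard_sdiff_eq_ncard F C hF
    have hpos : 0 < (F ∩ C).ncard := (inter_comm C F ▸ hCF).ncard_pos (hF.inter_of_left C)
    have hsame : (F \ C) \ ⋃₀ I = F \ ⋃₀ I := by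
      rw [sdiff_sdiff, union_eq_right.2 (subset_sUnion_of_mem hC)]
    have hevenC : ∀ C' ∈ I, Even (C' ∩ (F \ C)).ncard := fun C' hC' => by
      by_cases hCC' : C' = C
      · simp [hCC']
      · have hdisj : Disjoint C' C := hI hC' hC hCC'
        rw [← inter_sdiff_assoc, sdiff_eq_left.2 (hdisj.mono_left inter_subset_left)]
        exact heven C' hC'
    have hCeven : Even (F ∩ C).ncard := inter_comm C F ▸ heven C hC
    rw [← hsame, ih _ (by omega) hF.sdiff hevenC rfl, ← hn, ← hsplit, Nat.even_add,
      iff_true_left hCeven]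
  · push Not at hmeet
    have hdisj : Disjoint F (⋃₀ I) := disjoint_left.2 fun x hxF ⟨C, hC, hxC⟩ =>
      (hmeet C hC).subset ⟨hxC, hxF⟩
    rw [← hn, sdiff_eq_left.2 hdisj]

theorem EvenInter.sdiff_sUnion {D B : Set (Sym2 V)} {I : Set (Set (Sym2 V))}
    (hDB : EvenInter D B) (hI : I.PairwiseDisjoint id) (hID : ∀ C ∈ I, C ⊆ D)
    (hIB : ∀ C ∈ I, EvenInter C B) : EvenInter (D \ ⋃₀ I) B := by
  rw [EvenInter, sdiff_inter_right_comm]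
  refine ⟨hDB.1.sdiff, (even_ncard_sdiff_sUnion_iff hDB.1 hI fun C hC => ?_).2 hDB.2⟩
  rw [← inter_assoc, inter_eq_left.2 (hID C hC)]
  exact (hIB C hC).2

section Cuts

variable {G : SimpleGraph V} {A : Set V} {x y : V}

theorem mk_mem_cutEdges_iff : s(x, y) ∈ cutEdges G A ↔ G.Adj x y ∧ ¬(x ∈ A ↔ y ∈ A) := by
  constructor
  · rintro ⟨p, q, hpq, hp, hq, he⟩
    rcases Sym2.eq_iff.1 he with ⟨rfl, rfl⟩ | ⟨rfl, rfl⟩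
    · exact ⟨hpq, by tauto⟩
    · exact ⟨hpq.symm, by tauto⟩
  · rintro ⟨hxy, hA⟩
    by_cases hx : x ∈ A
    · exact ⟨x, y, hxy, hx, fun hy => hA (iff_of_true hx hy), rfl⟩
    · exact ⟨y, x, hxy.symm, by tauto, hx, Sym2.eq_swap⟩

theorem cutEdges_compl (G : SimpleGraph V) (A : Set V) : cutEdges G Aᶜ = cutEdges G A := by
  ext e
  induction e using Sym2.ind with
  | _ x y => simp only [mk_mem_cutEdges_iff, mem_compl_iff, not_iff_not]

theorem mem_iff_of_reachable_deleteEdges_cutEdges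
    (h : (G.deleteEdges (cutEdges G A)).Reachable x y) : x ∈ A ↔ y ∈ A :=
  h.mem_of_forall_adj (S := {v | x ∈ A ↔ v ∈ A}) Iff.rfl fun u w huw hu => by
    rw [deleteEdges_adj, mk_mem_cutEdges_iff] at huw
    exact hu.trans (not_not.1 fun h => huw.2 ⟨huw.1, h⟩)

theorem cutEdges_reachableSet_deleteEdges_subset (F : Set (Sym2 V)) (a : V) :
    cutEdges G {v | (G.deleteEdges F).Reachable a v} ⊆ F := by
  rintro _ ⟨u, w, huw, hu, hw, rfl⟩
  by_contra hF
  exact hw (Reachable.trans hu (deleteEdges_adj.2 ⟨huw, hF⟩).reachable)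

theorem isBond_cutEdges (hne : (cutEdges G A).Nonempty)
    (hside : ∀ x y, (x ∈ A ↔ y ∈ A) → (G.deleteEdges (cutEdges G A)).Reachable x y) :
    IsBond G (cutEdges G A) := by
  refine ⟨⟨A, rfl⟩, hne.ne_empty, ?_⟩
  rintro _ ⟨Z, rfl⟩ hZne hZA
  have hZ : ∀ x y, (x ∈ A ↔ y ∈ A) → (x ∈ Z ↔ y ∈ Z) := fun x y hxy =>
    mem_iff_of_reachable_deleteEdges_cutEdges ((hside x y hxy).mono (deleteEdges_anti hZA))
  obtain ⟨_, p, q, hpq, hp, hq, rfl⟩ := nonempty_iff_ne_empty.2 hZne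
  have hpqA := (mk_mem_cutEdges_iff.1 (hZA ⟨p, q, hpq, hp, hq, rfl⟩)).2
  have hZp : ∀ v, v ∈ Z ↔ (v ∈ A ↔ p ∈ A) := fun v => by
    by_cases hv : v ∈ A ↔ p ∈ A
    · exact iff_of_true ((hZ p v hv.symm).1 hp) hv
    · exact iff_of_false (fun hvZ => hq ((hZ v q (by tauto)).1 hvZ)) hv
  by_cases hpA : p ∈ A
  · rw [show Z = A from ext fun v => by simp [hZp, hpA]]
  · rw [show Z = Aᶜ from ext fun v => by simp [hZp, hpA], cutEdges_compl]

/-- The bond is `E(Y, V∖Y)`, where `A₁` is the component of `x` in `G[A]` and `Y` is the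
component of `y` in `G - A₁`. -/
theorem exists_isBond_mem_subset_cutEdges (hG : G.Connected) (hxy : G.Adj x y) (hx : x ∈ A)
    (hy : y ∉ A) : ∃ B, IsBond G B ∧ s(x, y) ∈ B ∧ B ⊆ cutEdges G A := by
  set A₁ := {v | (G.deleteEdges (cutEdges G A)).Reachable x v}
  set Y := {v | (G.deleteEdges (cutEdges G A₁)).Reachable y v}
  have hA₁A : cutEdges G A₁ ⊆ cutEdges G A := cutEdges_reachableSet_deleteEdges_subset _ _
  have hYA₁ : cutEdges G Y ⊆ cutEdges G A₁ := cutEdges_reachableSet_deleteEdges_subset _ _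
  have hxA₁ : x ∈ A₁ := Reachable.refl x
  have hyA₁ : y ∉ A₁ := fun h => hy ((mem_iff_of_reachable_deleteEdges_cutEdges h).1 hx)
  have hYA₁' : ∀ v ∈ Y, v ∉ A₁ := fun v hv hvA =>
    hyA₁ ((mem_iff_of_reachable_deleteEdges_cutEdges hv).2 hvA)
  have hxyY : s(x, y) ∈ cutEdges G Y :=
    mk_mem_cutEdges_iff.2 ⟨hxy, fun h => hYA₁' x (h.2 (Reachable.refl y)) hxA₁⟩
  set R := (G.deleteEdges (cutEdges G Y)).Reachable
  have hRy : ∀ v ∈ Y, R y v := fun v hv => Reachable.mono (deleteEdges_anti hYA₁) hv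
  have hRx : ∀ v ∉ Y, R x v := by
    have hRA₁ : ∀ v ∈ A₁, R x v := fun v hv =>
      Reachable.mono (deleteEdges_anti (hYA₁.trans hA₁A)) hv
    intro v hv
    refine ((hG.preconnected x v).mem_of_forall_adj (S := {w | w ∈ Y ∨ R x w})
      (Or.inr (Reachable.refl x)) fun u w huw hu => ?_).resolve_left hv
    by_cases hwY : w ∈ Y
    · exact Or.inl hwY
    by_cases hcut : s(u, w) ∈ cutEdges G Y
    · have huY : u ∈ Y := by have := (mk_mem_cutEdges_iff.1 hcut).2; tauto
      have := (mk_mem_cutEdges_iff.1 (hYA₁ hcut)).2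
      exact Or.inr (hRA₁ w (by have := hYA₁' u huY; tauto))
    · have huY : u ∉ Y := fun huY => hcut (mk_mem_cutEdges_iff.2 ⟨huw, by tauto⟩)
      exact Or.inr ((hu.resolve_left huY).trans (deleteEdges_adj.2 ⟨huw, hcut⟩).reachable)
  refine ⟨cutEdges G Y, isBond_cutEdges ⟨_, hxyY⟩ fun u v huv => ?_, hxyY, hYA₁.trans hA₁A⟩
  by_cases hu : u ∈ Y
  · exact (hRy u hu).symm.trans (hRy v (huv.1 hu))
  · exact (hRx u hu).symm.trans (hRx v fun hv => hu (huv.2 hv))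

end Cuts

section Circuits

variable {G : SimpleGraph V} {C D : Set (Sym2 V)}

theorem even_countP_edges_mem_cutEdges_iff (A : Set V) [DecidablePred (· ∈ cutEdges G A)] :
    ∀ {u v : V} (p : G.Walk u v),
      Even (p.edges.countP (· ∈ cutEdges G A)) ↔ (u ∈ A ↔ v ∈ A)
  | _, _, .nil => by simp
  | u, v, .cons (v := w) huw q => by
    have ih := even_countP_edges_mem_cutEdges_iff A q
    have hcut : s(u, w) ∈ cutEdges G A ↔ ¬(u ∈ A ↔ w ∈ A) :=
      mk_mem_cutEdges_iff.trans (and_iff_right huw)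
    rw [Walk.edges_cons, List.countP_cons]
    by_cases hc : s(u, w) ∈ cutEdges G A
    · rw [if_pos (decide_eq_true hc), Nat.even_add_one, ih]
      tauto
    · rw [if_neg (by simpa using hc), add_zero, ih]
      tauto

theorem IsCircuit.evenInter_cutEdges (hC : IsCircuit G C) (A : Set V) :
    EvenInter C (cutEdges G A) := by
  classical
  obtain ⟨v, p, hp, rfl⟩ := hC
  have hinter : {e | e ∈ p.edges} ∩ cutEdges G A =
      ((p.edges.filter (· ∈ cutEdges G A)).toFinset : Set (Sym2 V)) := by
    ext e
    simp
  rw [EvenInter, hinter, ncard_coe_finset,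
    List.toFinset_card_of_nodup (hp.edges_nodup.filter _), ← List.countP_eq_length_filter]
  exact ⟨Finset.finite_toSet _, (even_countP_edges_mem_cutEdges_iff A p).2 Iff.rfl⟩

theorem IsCircuit.nonempty (hC : IsCircuit G C) : C.Nonempty := by
  obtain ⟨v, p, hp, rfl⟩ := hC
  have := hp.three_le_length
  exact List.exists_mem_of_length_pos (by rw [Walk.length_edges]; omega)

theorem exists_isCircuit_subset_mem (hG : G.Connected) (hD : D ⊆ G.edgeSet)
    (hDB : ∀ B, IsBond G B → EvenInter D B) {e : Sym2 V} (he : e ∈ D) :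
    ∃ C, IsCircuit G C ∧ C ⊆ D ∧ e ∈ C := by
  induction e using Sym2.ind with | _ x y =>
  have hxy : (G.deleteEdges Dᶜ).Adj x y := deleteEdges_adj.2 ⟨hD he, not_not.2 he⟩
  by_cases hreach : ((G.deleteEdges Dᶜ).deleteEdges {s(x, y)}).Reachable x y
  · obtain ⟨u, p, hp, hep⟩ := adj_and_reachable_delete_edges_iff_exists_cycle.1 ⟨hxy, hreach⟩
    refine ⟨{f | f ∈ (p.mapLe (deleteEdges_le _)).edges}, ⟨u, _, hp.mapLe _, rfl⟩, ?_, ?_⟩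
    · intro f hf
      rw [mem_ofPred_eq, Walk.edges_mapLe_eq_edges] at hf
      have := p.edges_subset_edgeSet hf
      rw [edgeSet_deleteEdges] at this
      exact not_not.1 this.2
    · simpa [Walk.edges_mapLe_eq_edges] using hep
  · rw [deleteEdges_deleteEdges] at hreach
    obtain ⟨B, hB, hxyB, hBA⟩ :=
      exists_isBond_mem_subset_cutEdges (A := {v | (G.deleteEdges (Dᶜ ∪ {s(x, y)})).Reachable x v})
        hG (hD he) (Reachable.refl x) hreach
    have hDB' : D ∩ B = {s(x, y)} := Subset.antisymm
      (fun f hf => (cutEdges_reachableSet_deleteEdges_subset _ _ (hBA hf.2)).resolve_left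
        (not_not.2 hf.1))
      (singleton_subset_iff.2 ⟨he, hxyB⟩)
    have hodd := (hDB B hB).2
    rw [hDB', ncard_singleton] at hodd
    exact absurd hodd Nat.not_even_one

def IsCircuitPacking (G : SimpleGraph V) (D : Set (Sym2 V)) (I : Set (Set (Sym2 V))) : Prop :=
  (∀ C ∈ I, IsCircuit G C ∧ C ⊆ D) ∧ I.PairwiseDisjoint id

theorem exists_maximal_isCircuitPacking (G : SimpleGraph V) (D : Set (Sym2 V)) :
    ∃ I, Maximal (IsCircuitPacking G D) I :=
  zorn_subset {I | IsCircuitPacking G D I} fun c hc hchain =>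
    ⟨⋃₀ c, ⟨fun C ⟨_, hJ, hCJ⟩ => (hc hJ).1 C hCJ,
      (hchain.pairwiseDisjoint_sUnion id).2 fun _ hJ => (hc hJ).2⟩, fun _ => subset_sUnion_of_mem⟩

theorem sUnion_eq_of_maximal_isCircuitPacking {I : Set (Set (Sym2 V))} (hG : G.Connected)
    (hD : D ⊆ G.edgeSet) (hDB : ∀ B, IsBond G B → EvenInter D B)
    (hI : Maximal (IsCircuitPacking G D) I) : ⋃₀ I = D := by
  obtain ⟨⟨hIcirc, hIdisj⟩, hImax⟩ := hI
  refine (sUnion_subset fun C hC => (hIcirc C hC).2).antisymm fun e he => ?_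
  by_contra heI
  have hrest : ∀ B, IsBond G B → EvenInter (D \ ⋃₀ I) B := fun B hB => by
    obtain ⟨A, rfl⟩ := hB.1
    exact (hDB _ hB).sdiff_sUnion hIdisj (fun C hC => (hIcirc C hC).2)
      fun C hC => (hIcirc C hC).1.evenInter_cutEdges A
  obtain ⟨C, hC, hCD, heC⟩ :=
    exists_isCircuit_subset_mem hG (sdiff_subset.trans hD) hrest ⟨he, heI⟩
  have hinsert : IsCircuitPacking G D (insert C I) := by
    refine ⟨forall_mem_insert.2 ⟨⟨hC, hCD.trans sdiff_subset⟩, hIcirc⟩,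
      hIdisj.insert fun C' hC' _ => disjoint_left.2 fun f hfC hfC' => ?_⟩
    exact (hCD hfC).2 (mem_sUnion_of_mem hfC' hC')
  exact heI (mem_sUnion_of_mem heC (hImax hinsert (subset_insert C I) (mem_insert C I)))

end Circuits

/-- In a connected locally finite graph, an edge set having finite even intersection
with every bond is the union of a pairwise disjoint countable family of finite
circuits. -/
theorem stmt_15 (G : SimpleGraph V) (hconn : G.Connected)
    (hlf : ∀ x : V, (G.neighborSet x).Finite)
    (D : Set (Sym2 V)) (hD : D ⊆ G.edgeSet)
    (h : ∀ B, IsBond G B → EvenInter D B) :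
    ∃ I : Set (Set (Sym2 V)), I.Countable ∧ (∀ C ∈ I, IsCircuit G C) ∧
      I.Pairwise Disjoint ∧ D = ⋃₀ I := by
  have := hconn.preconnected.countable_of_finite_neighborSet hlf
  obtain ⟨I, hI⟩ := exists_maximal_isCircuitPacking G D
  have hID := sUnion_eq_of_maximal_isCircuitPacking hconn hD h hI
  obtain ⟨⟨hIcirc, hIdisj⟩, -⟩ := hI
  exact ⟨I, hIdisj.countable_of_nonempty (fun C hC => (hIcirc C hC).1.nonempty)
    (hID ▸ D.to_countable), fun C hC => (hIcirc C hC).1, hIdisj, hID.symm⟩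
end

section
/- Let k be a positive integer and let G be a locally finite k-connected simple graph. Then G is k-padded at infinity, i.e., every end of G is k-padded. -/
/-!
The set `S` can be taken empty. As `R'` is a ray, its image `Y` is infinite, so by
`k`-connectivity no set of fewer than `k` vertices avoiding a vertex `v` separates `v` from
`Y \ {v}`, and the fan form of Menger's theorem gives a `k`-fan from `v` to `Y`.

The fan lemma is proved by augmenting flows out of `v` in the digraph obtained by splitting each
vertex into an arc. A flow of value less than `k` has an augmenting path, since otherwise the arcs
leaving the residually reachable nodes would give a separator of fewer than `k` vertices. The edge
arcs of a flow of value `k` form a branching rooted at `v`, along which the `k` paths of the fan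
are followed.
-/

open Set

variable {V : Type*}

namespace ArcSet

open Finset

variable {N : Type*} [DecidableEq N]

def inDeg (F : Finset (N × N)) (n : N) : ℕ := #{a ∈ F | a.2 = n}

def outDeg (F : Finset (N × N)) (n : N) : ℕ := #{a ∈ F | a.1 = n}

def excess (F : Finset (N × N)) (n : N) : ℤ := inDeg F n - outDeg F n

lemma excess_insert {F : Finset (N × N)} {a : N × N} (ha : a ∉ F) (n : N) :
    excess (insert a F) n =
      excess F n + (if a.2 = n then 1 else 0) - (if a.1 = n then 1 else 0) := by
  simp only [excess, inDeg, outDeg, filter_insert]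
  split_ifs <;> simp [card_insert_of_notMem, ha] <;> ring

lemma exists_mem_of_excess_eq_zero {F : Finset (N × N)} {p n : N}
    (h : excess F n = 0) (hp : (p, n) ∈ F) : ∃ q, (n, q) ∈ F := by
  have hin : 0 < inDeg F n := card_pos.mpr ⟨_, mem_filter.mpr ⟨hp, rfl⟩⟩
  obtain ⟨a, ha⟩ := card_pos.mp (show 0 < outDeg F n by rw [excess] at h; omega)
  obtain ⟨haF, rfl⟩ := mem_filter.mp ha
  exact ⟨a.2, haF⟩

def ResStep (arc : N → N → Prop) (F : Finset (N × N)) (p q : N) : Prop :=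
  (arc p q ∧ (p, q) ∉ F) ∨ (q, p) ∈ F

def toggle (F : Finset (N × N)) (p q : N) : Finset (N × N) :=
  if (q, p) ∈ F then F.erase (q, p) else insert (p, q) F

variable {arc : N → N → Prop} {F : Finset (N × N)} {p q : N}

lemma excess_toggle (h : ResStep arc F p q) (n : N) :
    excess (toggle F p q) n =
      excess F n + (if q = n then 1 else 0) - (if p = n then 1 else 0) := by
  by_cases hqp : (q, p) ∈ F
  · have := excess_insert (notMem_erase (q, p) F) n
    rw [insert_erase hqp] at this
    rw [toggle, if_pos hqp]
    linarith
  · rw [toggle, if_neg hqp]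
    exact excess_insert (h.resolve_right hqp).2 n

lemma mem_toggle_iff {a : N × N} (h₁ : a ≠ (p, q)) (h₂ : a ≠ (q, p)) :
    a ∈ toggle F p q ↔ a ∈ F := by
  unfold toggle
  split_ifs <;> simp [h₁, h₂]

lemma arc_of_mem_toggle (hF : ∀ a ∈ F, arc a.1 a.2) (h : ResStep arc F p q) :
    ∀ a ∈ toggle F p q, arc a.1 a.2 := by
  unfold toggle
  split_ifs with hqp
  · exact fun a ha => hF a (mem_of_mem_erase ha)
  · rintro a ha
    rcases mem_insert.mp ha with rfl | ha
    exacts [(h.resolve_right hqp).1, hF a ha]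

lemma resStep_toggle_iff {x y : N} (hx : x ≠ p) (hy : y ≠ p) :
    ResStep arc (toggle F p q) x y ↔ ResStep arc F x y := by
  rw [ResStep, ResStep, mem_toggle_iff (by simp [hx]) (by simp [hy]),
    mem_toggle_iff (by simp [hy]) (by simp [hx])]

def augment (F : Finset (N × N)) : List N → Finset (N × N)
  | p :: q :: l => augment (toggle F p q) (q :: l)
  | _ => F

/-- Each toggle moves one unit of excess from `p` to `q`; as the path is simple, the later steps
stay residual. -/
theorem augment_spec {l : List N} {t : N} (hF : ∀ a ∈ F, arc a.1 a.2)
    (hc : (p :: l).IsChain (ResStep arc F)) (hl : (p :: l).getLast (List.cons_ne_nil _ _) = t)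
    (hnd : (p :: l).Nodup) :
    (∀ a ∈ augment F (p :: l), arc a.1 a.2) ∧ ∀ n, excess (augment F (p :: l)) n =
      excess F n + (if t = n then 1 else 0) - (if p = n then 1 else 0) := by
  induction l generalizing p F with
  | nil =>
    rw [List.getLast_singleton] at hl
    subst hl
    exact ⟨hF, fun n => by simp only [augment]; ring⟩
  | cons q l ih =>
    rw [List.isChain_cons_cons] at hc
    rw [List.getLast_cons (List.cons_ne_nil _ _)] at hl
    have hp : p ∉ q :: l := (List.nodup_cons.mp hnd).1
    have hc' : (q :: l).IsChain (ResStep arc (toggle F p q)) :=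
      hc.2.imp_of_mem_imp fun x y hx hy =>
        (resStep_toggle_iff (ne_of_mem_of_not_mem hx hp) (ne_of_mem_of_not_mem hy hp)).mpr
    obtain ⟨harc, hex⟩ := ih (arc_of_mem_toggle hF hc.1) hc' hl (List.nodup_cons.mp hnd).2
    refine ⟨harc, fun n => ?_⟩
    rw [augment, hex, excess_toggle hc.1]
    ring

theorem card_leaving_sub_card_entering {Z : Set N} [DecidablePred (· ∈ Z)] {s t : N}
    (hs : s ∈ Z) (ht : t ∉ Z) (hbal : ∀ n, n ≠ s → n ≠ t → excess F n = 0) :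
    (#{a ∈ F | a.1 ∈ Z ∧ a.2 ∉ Z} : ℤ) - #{a ∈ F | a.1 ∉ Z ∧ a.2 ∈ Z} =
      -excess F s := by
  set T := (insert s (F.image Prod.fst ∪ F.image Prod.snd)).filter (· ∈ Z)
  have hfiber : ∀ f : N × N → N,
      (∀ a ∈ F, f a ∈ F.image Prod.fst ∪ F.image Prod.snd) →
      #{a ∈ F | f a ∈ Z} = ∑ n ∈ T, #{a ∈ F | f a = n} := by
    intro f hf
    rw [card_eq_sum_card_fiberwise (f := f) (t := T)]
    · refine sum_congr rfl fun n hn => ?_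
      rw [filter_filter]
      exact congrArg card (filter_congr fun a _ =>
        ⟨fun h => h.2, fun h => ⟨h ▸ (mem_filter.mp hn).2, h⟩⟩)
    · intro a ha
      rw [mem_coe, mem_filter] at ha
      exact mem_filter.mpr ⟨mem_insert_of_mem (hf a ha.1), ha.2⟩
  have hfst : #{a ∈ F | a.1 ∈ Z} = ∑ n ∈ T, outDeg F n :=
    hfiber Prod.fst fun a ha => mem_union_left _ (mem_image_of_mem _ ha)
  have hsnd : #{a ∈ F | a.2 ∈ Z} = ∑ n ∈ T, inDeg F n :=
    hfiber Prod.snd fun a ha => mem_union_right _ (mem_image_of_mem _ ha)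
  have hsum : ∑ n ∈ T, excess F n = excess F s := by
    refine sum_eq_single_of_mem s (by simp [T, hs]) fun n hn hns => hbal n hns ?_
    rintro rfl
    exact ht (mem_filter.mp hn).2
  have h₁ := card_filter_add_card_filter_not (s := {a ∈ F | a.1 ∈ Z}) (fun a => a.2 ∈ Z)
  have h₂ := card_filter_add_card_filter_not (s := {a ∈ F | a.2 ∈ Z}) (fun a => a.1 ∈ Z)
  simp only [filter_filter] at h₁ h₂
  simp only [excess, sum_sub_distrib] at hsum
  have e₁ : #{a ∈ F | a.1 ∈ Z ∧ a.2 ∈ Z} = #{a ∈ F | a.2 ∈ Z ∧ a.1 ∈ Z} :=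
    congrArg card (filter_congr fun _ _ => and_comm)
  have e₂ : #{a ∈ F | a.1 ∉ Z ∧ a.2 ∈ Z} = #{a ∈ F | a.2 ∈ Z ∧ a.1 ∉ Z} :=
    congrArg card (filter_congr fun _ _ => and_comm)
  rw [← Nat.cast_sum, ← Nat.cast_sum, ← hfst, ← hsnd] at hsum
  rw [excess]
  omega

end ArcSet

theorem List.exists_isChain_cons_nodup_of_relationReflTransGen {α : Type*} {r : α → α → Prop}
    {a b : α} (h : Relation.ReflTransGen r a b) :
    ∃ l, (a :: l).IsChain r ∧ (a :: l).getLast (cons_ne_nil _ _) = b ∧ (a :: l).Nodup := by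
  induction h using Relation.ReflTransGen.head_induction_on with
  | refl => exact ⟨[], by simp⟩
  | @head a c hac _ ih =>
    obtain ⟨l, hc, hl, hnd⟩ := ih
    by_cases ha : a ∈ c :: l
    · obtain ⟨s, t, hst⟩ := List.append_of_mem ha
      have hsuf : a :: t <:+ c :: l := hst ▸ List.suffix_append s (a :: t)
      refine ⟨t, hc.suffix hsuf, ?_, hnd.sublist hsuf.sublist⟩
      rw [← hl]
      simp only [hst, List.getLast_append_of_ne_nil _ (List.cons_ne_nil a t)]
    · exact ⟨c :: l, List.isChain_cons_cons.mpr ⟨hac, hc⟩, by rwa [List.getLast_cons],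
        List.nodup_cons.mpr ⟨ha, hnd⟩⟩

namespace Relation.ReflTransGen

variable {α : Type*} {r : α → α → Prop} {a b c : α}

lemma eq_of_forall_not_rel (h : ReflTransGen r a b) (hb : ∀ x, ¬ r x b) : a = b := by
  rcases h.cases_tail with h | ⟨c, -, hc⟩
  exacts [h.symm, absurd hc (hb c)]

/-- Walking backwards from an `r`-cycle one stays on it, hence never reaches `a`. -/
lemma not_of_leftUnique (hr : Relator.LeftUnique r) (ha : ∀ x, ¬ r x a)
    (hab : ReflTransGen r a b) (hbc : r b c) : ¬ ReflTransGen r c b := by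
  intro hcb
  have hback : ∀ x, ReflTransGen r x b → ReflTransGen r c x := by
    intro x hx
    induction hx using head_induction_on with
    | refl => exact hcb
    | @head x y hxy _ ih =>
      rcases ih.cases_tail with rfl | ⟨d, hcd, hdy⟩
      · exact hr hbc hxy ▸ hcb
      · exact hr hdy hxy ▸ hcd
  cases (hback a hab).eq_of_forall_not_rel ha
  exact ha b hbc

end Relation.ReflTransGen

open Relation

structure IsBranching (G : SimpleGraph V) (u : V) (Y : Set V) (E : V → V → Prop) : Prop where
  adj : ∀ ⦃x z⦄, E x z → G.Adj x z
  finite : {z | ∃ x, E x z}.Finite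
  leftUnique : Relator.LeftUnique E
  not_rel_root : ∀ x, ¬ E x u
  exists_rel : ∀ ⦃x z⦄, E x z → z ∉ Y → ∃ a, E z a

namespace IsBranching

variable {G : SimpleGraph V} {u : V} {Y : Set V} {E : V → V → Prop}

lemma ne_root (hE : IsBranching G u Y E) {w x : V} (hw : w ≠ u) (h : ReflTransGen E w x) :
    x ≠ u := by
  rintro rfl
  exact hw (h.eq_of_forall_not_rel hE.not_rel_root)

/-- Induction on the size of the set reachable from `w`, which shrinks along `E`. -/
lemma exists_isPath (hE : IsBranching G u Y E) {w : V} (huw : ReflTransGen E u w) (hw : w ≠ u) :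
    ∃ y ∈ Y, ∃ P : G.Walk w y, P.IsPath ∧ ∀ x ∈ P.support, ReflTransGen E w x := by
  have hfin : ∀ w, {x | ReflTransGen E w x}.Finite := fun w =>
    (hE.finite.insert w).subset fun x hx => by
      rcases (show ReflTransGen E w x from hx).cases_tail with rfl | ⟨c, -, hc⟩
      exacts [Set.mem_insert _ _, Set.mem_insert_of_mem _ ⟨c, hc⟩]
  induction hn : {x | ReflTransGen E w x}.ncard using Nat.strong_induction_on generalizing w with
  | _ n ih =>
  by_cases hsucc : ∃ a, E w a
  · obtain ⟨a, hwa⟩ := hsucc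
    have hback : ¬ ReflTransGen E a w := huw.not_of_leftUnique hE.leftUnique hE.not_rel_root hwa
    have hlt : {x | ReflTransGen E a x}.ncard < n := hn ▸ Set.ncard_lt_ncard
      ⟨fun x hx => ReflTransGen.head hwa hx, fun h => hback (h ReflTransGen.refl)⟩ (hfin w)
    obtain ⟨y, hy, Q, hQ, hQsupp⟩ :=
      ih _ hlt (huw.tail hwa) (hE.ne_root hw (ReflTransGen.single hwa)) rfl
    refine ⟨y, hy, .cons (hE.adj hwa) Q, hQ.cons fun h => hback (hQsupp w h), ?_⟩
    simp only [SimpleGraph.Walk.support_cons, List.mem_cons, forall_eq_or_imp]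
    exact ⟨ReflTransGen.refl, fun x hx => ReflTransGen.head hwa (hQsupp x hx)⟩
  · refine ⟨w, ?_, .nil, .nil, by simp [ReflTransGen.refl]⟩
    by_contra hwY
    rcases huw.cases_tail with h | ⟨c, -, hcw⟩
    exacts [hw h, hsucc (hE.exists_rel hcw hwY)]

/-- The subtrees below distinct children of `u` are disjoint because predecessors are unique. -/
theorem exists_isFan (hE : IsBranching G u Y E) : ∃ F, IsFan G {z | E u z}.ncard u Y F := by
  set W := {z | E u z}
  have : Finite W := hE.finite.subset fun z hz => ⟨u, hz⟩
  let e : Fin W.ncard ≃ W := (Finite.equivFinOfCardEq (Nat.card_coe_set_eq W)).symm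
  have hne : ∀ {a}, E u a → a ≠ u := fun h => (G.ne_of_adj (hE.adj h)).symm
  have hchild : ∀ {a b}, E u a → E u b → ReflTransGen E a b → a = b := by
    intro a b ha hb hab
    rcases hab.cases_tail with h | ⟨c, hac, hcb⟩
    · exact h.symm
    · cases hE.leftUnique hcb hb
      exact absurd rfl (hE.ne_root (hne ha) hac)
  have hdisj : ∀ i j x, ReflTransGen E (e i) x → ReflTransGen E (e j) x → i = j := by
    intro i j x hi hj
    refine e.injective (Subtype.ext ?_)
    rcases ReflTransGen.total_of_right_unique (r := Function.swap E)
      (fun _ _ _ h h' => hE.leftUnique h h') (reflTransGen_swap.mpr hi)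
      (reflTransGen_swap.mpr hj) with h | h
    exacts [(hchild (e j).2 (e i).2 (reflTransGen_swap.mp h)).symm,
      hchild (e i).2 (e j).2 (reflTransGen_swap.mp h)]
  choose y hy P hP hsupp using fun i =>
    hE.exists_isPath (ReflTransGen.single (e i).2) (hne (e i).2)
  refine ⟨_, y, fun i => .cons (hE.adj (e i).2) (P i), fun i => ?_, hy, ?_, ?_, rfl⟩
  · exact (hP i).cons fun h => hE.ne_root (hne (e i).2) (hsupp i u h) rfl
  · intro i j hij
    exact hdisj i j _ (hsupp i _ (P i).end_mem_support) (hij ▸ hsupp j _ (P j).end_mem_support)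
  · intro i j hij x hxi hxj
    rw [SimpleGraph.Walk.support_cons, List.mem_cons] at hxi hxj
    rcases hxi with hxi | hxi
    · exact hxi
    rcases hxj with hxj | hxj
    · exact hxj
    exact absurd (hdisj i j x (hsupp i x hxi) (hsupp j x hxj)) hij

end IsBranching

/-- Fans from `u` to `Y` in `G` are modelled as flows from `out u` to `sink` in the digraph
`SplitNode.Arc G u Y` obtained by splitting every vertex `v ≠ u` into an arc `inn v → out v`,
turning each edge `vw` into the arcs `out v → inn w` and `out w → inn v`, and joining `out y` to
the sink for `y ∈ Y \ {u}`. -/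
inductive SplitNode (V : Type*)
  | inn : V → SplitNode V
  | out : V → SplitNode V
  | sink : SplitNode V

namespace SplitNode

open Finset Relation ArcSet

noncomputable instance : DecidableEq (SplitNode V) := Classical.decEq _

variable (G : SimpleGraph V) (u : V) (Y : Set V)

inductive Arc : SplitNode V → SplitNode V → Prop
  | split {v : V} : v ≠ u → Arc (inn v) (out v)
  | edge {v w : V} : G.Adj v w → Arc (out v) (inn w)
  | toSink {y : V} : y ∈ Y → y ≠ u → Arc (out y) sink

structure IsFlow (F : Finset (SplitNode V × SplitNode V)) : Prop where
  arc : ∀ a ∈ F, Arc G u Y a.1 a.2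
  excess_eq_zero : ∀ n, n ≠ out u → n ≠ sink → excess F n = 0

/-- The vertex of `G` an arc of the split digraph stands for. -/
def cutVertex : SplitNode V × SplitNode V → V
  | (_, inn w) => w
  | (_, out v) => v
  | (out y, sink) => y
  | _ => u

variable {G u Y} {F : Finset (SplitNode V × SplitNode V)}

lemma inDeg_out_eq_zero (hF : ∀ a ∈ F, Arc G u Y a.1 a.2) : inDeg F (out u) = 0 := by
  refine card_eq_zero.mpr (filter_eq_empty_iff.mpr ?_)
  rintro ⟨p, q⟩ ha rfl
  cases hF _ ha with
  | split h => exact h rfl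

namespace IsFlow

lemma inDeg_inn_le_one (hF : IsFlow G u Y F) (v : V) : inDeg F (inn v) ≤ 1 := by
  have h := hF.excess_eq_zero (inn v) (by simp) (by simp)
  have : outDeg F (inn v) ≤ 1 := card_le_one.mpr fun a ha b hb => by
    obtain ⟨haF, ha1⟩ := mem_filter.mp ha
    obtain ⟨hbF, hb1⟩ := mem_filter.mp hb
    obtain ⟨a₁, a₂⟩ := a
    obtain ⟨b₁, b₂⟩ := b
    simp only at ha1 hb1
    subst ha1 hb1
    cases hF.arc _ haF
    cases hF.arc _ hbF
    rfl
  rw [excess] at h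
  omega

lemma notMem_inn (hF : IsFlow G u Y F) (p : SplitNode V) : (p, inn u) ∉ F := by
  intro hp
  obtain ⟨q, hq⟩ := exists_mem_of_excess_eq_zero (hF.excess_eq_zero _ (by simp) (by simp)) hp
  cases hF.arc _ hq with
  | split h => exact h rfl

theorem exists_outDeg_eq_succ (hF : IsFlow G u Y F)
    (h : ReflTransGen (ResStep (Arc G u Y) F) (out u) sink) :
    ∃ F', IsFlow G u Y F' ∧ outDeg F' (out u) = outDeg F (out u) + 1 := by
  obtain ⟨l, hc, hl, hnd⟩ := List.exists_isChain_cons_nodup_of_relationReflTransGen h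
  obtain ⟨harc, hex⟩ := augment_spec hF.arc hc hl hnd
  refine ⟨_, ⟨harc, fun n h₁ h₂ => ?_⟩, ?_⟩
  · rw [hex, hF.excess_eq_zero n h₁ h₂, if_neg (Ne.symm h₂), if_neg (Ne.symm h₁)]
    rfl
  · have := hex (out u)
    simp only [excess, inDeg_out_eq_zero harc, inDeg_out_eq_zero hF.arc] at this
    simp at this
    omega

lemma ncard_inn_eq_outDeg_out (hF : ∀ a ∈ F, Arc G u Y a.1 a.2) :
    {z | (out u, inn z) ∈ F}.ncard = outDeg F (out u) := by
  have himage : (fun z => (out u, inn z)) '' {z | (out u, inn z) ∈ F} =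
      ↑{a ∈ F | a.1 = out u} := by
    ext ⟨p, q⟩
    simp only [Set.mem_image, coe_filter, Prod.mk.injEq]
    constructor
    · rintro ⟨z, hz, rfl, rfl⟩
      exact ⟨hz, rfl⟩
    · rintro ⟨hpq, rfl⟩
      cases hF _ hpq with
      | edge _ => exact ⟨_, hpq, rfl, rfl⟩
      | toSink _ hu => exact absurd rfl hu
  have hinj : Function.Injective fun z : V => (out u, inn z) := fun _ _ h => by simpa using h
  rw [← Set.ncard_image_of_injective _ hinj, himage, Set.ncard_coe_finset]
  rfl

lemma isBranching (hF : IsFlow G u Y F) : IsBranching G u Y fun x z => (out x, inn z) ∈ F where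
  adj x z h := by
    cases hF.arc _ h with
    | edge h => exact h
  finite := by
    refine ((F.image Prod.snd).finite_toSet.preimage (Set.injOn_of_injective
      (f := inn) fun _ _ h => by simpa using h)).subset ?_
    rintro z ⟨x, hx⟩
    exact mem_image_of_mem Prod.snd hx
  leftUnique x x' z hx hx' := by
    simpa using card_le_one.mp (hF.inDeg_inn_le_one z) _ (mem_filter.mpr ⟨hx, rfl⟩) _
      (mem_filter.mpr ⟨hx', rfl⟩)
  not_rel_root _ := hF.notMem_inn _
  exists_rel x z h hz := by
    obtain ⟨q, hq⟩ := exists_mem_of_excess_eq_zero (hF.excess_eq_zero _ (by simp) (by simp)) h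
    cases hF.arc _ hq with
    | split hzu =>
      obtain ⟨r, hr⟩ := exists_mem_of_excess_eq_zero
        (hF.excess_eq_zero _ (by simpa using hzu) (by simp)) hq
      cases hF.arc _ hr with
      | edge _ => exact ⟨_, hr⟩
      | toSink hzY _ => exact absurd hzY hz

theorem exists_isFan (hF : IsFlow G u Y F) : ∃ S, IsFan G (outDeg F (out u)) u Y S :=
  ncard_inn_eq_outDeg_out hF.arc ▸ hF.isBranching.exists_isFan

lemma exists_leaving_mem_support {Z : Set (SplitNode V)}
    (hZ : ∀ p q, p ∈ Z → Arc G u Y p q → (p, q) ∉ F → q ∈ Z) (hu : out u ∈ Z)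
    (ht : sink ∉ Z) {x y : V} (hx : out x ∈ Z) (hy : y ∈ Y) (hyu : y ≠ u) (w : G.Walk x y) :
    ∃ a ∈ F, a.1 ∈ Z ∧ a.2 ∉ Z ∧ cutVertex u a ∈ w.support := by
  induction w with
  | @nil v =>
    by_cases hF : (out v, sink) ∈ F
    · exact ⟨_, hF, hx, ht, by simp [cutVertex]⟩
    · exact absurd (hZ _ _ hx (.toSink hy hyu) hF) ht
  | @cons x z y hxz w ih =>
    have hsupp : z ∈ (SimpleGraph.Walk.cons hxz w).support := by simp
    by_cases hinn : inn z ∈ Z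
    · by_cases hout : out z ∈ Z
      · obtain ⟨a, ha, h₁, h₂, hmem⟩ := ih hout hy hyu
        exact ⟨a, ha, h₁, h₂, List.mem_cons_of_mem _ hmem⟩
      · have hzu : z ≠ u := by rintro rfl; exact hout hu
        by_cases hF : (inn z, out z) ∈ F
        · exact ⟨_, hF, hinn, hout, hsupp⟩
        · exact absurd (hZ _ _ hinn (.split hzu) hF) hout
    · by_cases hF : (out x, inn z) ∈ F
      · exact ⟨_, hF, hx, hinn, hsupp⟩
      · exact absurd (hZ _ _ hx (.edge hxz) hF) hinn

theorem reachable_sink {k : ℕ} (hF : IsFlow G u Y F)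
    (hsep : ∀ S : Finset V, u ∉ S → S.card < k → ∃ y ∈ Y, y ≠ u ∧
      ∃ w : G.Walk u y, ∀ x ∈ w.support, x ∉ S)
    (hk : outDeg F (out u) < k) : ReflTransGen (ResStep (Arc G u Y) F) (out u) sink := by
  classical
  by_contra ht
  set Z := {n | ReflTransGen (ResStep (Arc G u Y) F) (out u) n}
  have hback : ∀ a ∈ F, a.2 ∈ Z → a.1 ∈ Z := fun a ha h => ReflTransGen.tail h (Or.inr ha)
  have hL : #{a ∈ F | a.1 ∈ Z ∧ a.2 ∉ Z} = outDeg F (out u) := by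
    have := card_leaving_sub_card_entering (F := F) (Z := Z) ReflTransGen.refl ht
      hF.excess_eq_zero
    have hent : #{a ∈ F | a.1 ∉ Z ∧ a.2 ∈ Z} = 0 :=
      card_eq_zero.mpr (filter_eq_empty_iff.mpr fun a ha h => h.1 (hback a ha h.2))
    rw [excess, inDeg_out_eq_zero hF.arc] at this
    omega
  have huS : u ∉ {a ∈ F | a.1 ∈ Z ∧ a.2 ∉ Z}.image (cutVertex u) := by
    simp only [Finset.mem_image, not_exists, not_and]
    rintro ⟨p, q⟩ ha hu
    cases hF.arc _ (mem_filter.mp ha).1 with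
    | split h => exact h hu
    | edge _ =>
      rw [cutVertex] at hu
      exact hF.notMem_inn _ (hu ▸ (mem_filter.mp ha).1)
    | toSink _ h => exact h hu
  obtain ⟨y, hy, hyu, w, hw⟩ := hsep _ huS (card_image_le.trans_lt (hL ▸ hk))
  obtain ⟨a, ha, h₁, h₂, hmem⟩ := exists_leaving_mem_support (Z := Z)
    (fun p q hp h hpq => ReflTransGen.tail hp (Or.inl ⟨h, hpq⟩)) ReflTransGen.refl ht
    ReflTransGen.refl hy hyu w
  exact hw _ hmem (mem_image_of_mem _ (mem_filter.mpr ⟨ha, h₁, h₂⟩))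

end IsFlow

lemma isFlow_empty : IsFlow G u Y ∅ :=
  ⟨by simp, fun n _ _ => by simp [excess, inDeg, outDeg]⟩

end SplitNode

open SplitNode ArcSet in
theorem exists_isFan_of_no_small_separator {G : SimpleGraph V} {u : V} {Y : Set V} {k : ℕ}
    (hsep : ∀ S : Finset V, u ∉ S → S.card < k → ∃ y ∈ Y, y ≠ u ∧
      ∃ w : G.Walk u y, ∀ x ∈ w.support, x ∉ S) :
    ∃ S, IsFan G k u Y S := by
  have hflow : ∀ j ≤ k, ∃ F, IsFlow G u Y F ∧ outDeg F (out u) = j := by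
    intro j hj
    induction j with
    | zero => exact ⟨∅, isFlow_empty, by simp [outDeg]⟩
    | succ j ih =>
      obtain ⟨F, hF, rfl⟩ := ih (by omega)
      exact hF.exists_outDeg_eq_succ (hF.reachable_sink hsep hj)
  obtain ⟨F, hF, hk⟩ := hflow k le_rfl
  exact hk ▸ hF.exists_isFan

lemma KConnected.exists_walk_avoiding {G : SimpleGraph V} {k : ℕ} (hG : KConnected G k)
    (S : Finset V) (hS : S.card < k) {a b : V} (ha : a ∉ S) (hb : b ∉ S) :
    ∃ w : G.Walk a b, ∀ x ∈ w.support, x ∉ S := by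
  have hconn := hG.2 S S.finite_toSet (by rwa [Set.ncard_coe_finset])
  obtain ⟨w⟩ := hconn.preconnected ⟨a, ha⟩ ⟨b, hb⟩
  let f := (SimpleGraph.Embedding.induce (G := G) (S : Set V)ᶜ).toHom
  refine ⟨w.map f, fun x hx => ?_⟩
  have hx' : x ∈ (w.map f).support := hx
  rw [SimpleGraph.Walk.support_map, List.mem_map] at hx'
  obtain ⟨x, -, rfl⟩ := hx'
  exact x.2

theorem stmt_17_general (k : ℕ) (G : SimpleGraph V) (hconn : KConnected G k) :
    PaddedAtInfinity G k := by
  intro R _ R' hR' _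
  refine ⟨∅, Set.finite_empty, fun v _ =>
    exists_isFan_of_no_small_separator fun S hvS hS => ?_⟩
  obtain ⟨y, ⟨n, rfl⟩, hy⟩ := ((Set.infinite_range_of_injective hR'.1).sdiff
    (S.finite_toSet.insert v)).nonempty
  simp only [Set.mem_insert_iff, Finset.mem_coe, not_or] at hy
  exact ⟨_, ⟨n, rfl⟩, hy.1, hconn.exists_walk_avoiding S hS hvS hy.2⟩

/-- Every locally finite `k`-connected graph is `k`-padded at infinity. -/
theorem stmt_17 (k : ℕ) (hk : 0 < k) (G : SimpleGraph V)
    (hlf : ∀ x : V, (G.neighborSet x).Finite) (hconn : KConnected G k) :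
    PaddedAtInfinity G k :=
  stmt_17_general k G hconn
end
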